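/- arXiv:solv-int/9705018 — 5 statements merged into one kernel-verified Lean document; each statement's English description precedes it below -/
import Mathlib

section
/- If (p,q) is a meromorphic algebro-geometric AKNS potential with p and q not identically zero, then for every point x₀ ∈ ℂ one has ord_{x₀}(p) + ord_{x₀}(q) ≥ −2, where ord_{x₀}(f) denotes the order of the meromorphic function f at x₀ (negative at a pole). In particular, at every point the sum of the pole orders of p and q is at most 2. -/
/-!
For every `E` the zero-curvature equations make `G² - F H` independent of `x`, and as a
polynomial in `E` it is monic of degree `2n + 2`; let `E₀` be a root. Near `x₀` then
`G(E₀)² = F(E₀) H(E₀)`, while `F' + 2iE₀ F = 2qG` and `H' - 2iE₀ H = 2pG`. Since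
differentiation lowers the order of a meromorphic function by at most one, this gives
`ord F ≤ ord q + ord G + 1` and `ord H ≤ ord p + ord G + 1`, whose sum is the claim as long as
`G(E₀) ≢ 0`. Otherwise `F(E₀)` and `H(E₀)` vanish as well, `E - E₀` divides `F`, `G`, `H`,
and the quotients solve the same system with `n` lowered by one; for `n = 0` it forces
`q ≡ 0` near `x₀`, where the claim is trivial.
-/

open Complex

noncomputable section

/-- `akPoly n f E x = ∑_{ℓ=0}^{n} f_{n-ℓ}(x) E^ℓ`. -/
def akPoly (n : ℕ) (f : ℕ → ℂ → ℂ) (E x : ℂ) : ℂ :=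
  ∑ ℓ ∈ Finset.range (n + 1), f (n - ℓ) x * E ^ ℓ

/-- The stationary zero-curvature system `F_x = -2iE F + 2q G`, `G_x = p F + q H`,
`H_x = 2iE H + 2p G` holds off the exceptional set `S`. -/
def ZeroCurvOn (p q : ℂ → ℂ) (n : ℕ) (f g h : ℕ → ℂ → ℂ) (S : Set ℂ) : Prop :=
  ∀ E : ℂ, ∀ x ∉ S,
    deriv (fun y => akPoly n f E y) x
      = -2 * I * E * akPoly n f E x + 2 * q x * akPoly (n + 1) g E x ∧
    deriv (fun y => akPoly (n + 1) g E y) x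
      = p x * akPoly n f E x + q x * akPoly n h E x ∧
    deriv (fun y => akPoly n h E y) x
      = 2 * I * E * akPoly n h E x + 2 * p x * akPoly (n + 1) g E x

/-- `(p,q)` is a meromorphic algebro-geometric AKNS potential with data `n, f, g, h`,
where all functions involved are meromorphic on `ℂ` and analytic off the closed
countable set `S`, and `f 0 = -i q`, `g 0 = 1`, `h 0 = i p`. -/
def IsAGData (p q : ℂ → ℂ) (n : ℕ) (f g h : ℕ → ℂ → ℂ) (S : Set ℂ) : Prop :=
  MeromorphicOn p Set.univ ∧ MeromorphicOn q Set.univ ∧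
  (∀ k, MeromorphicOn (f k) Set.univ) ∧
  (∀ k, MeromorphicOn (g k) Set.univ) ∧
  (∀ k, MeromorphicOn (h k) Set.univ) ∧
  S.Countable ∧ IsClosed S ∧
  (∀ x ∉ S, AnalyticAt ℂ p x ∧ AnalyticAt ℂ q x ∧
    (∀ k, AnalyticAt ℂ (f k) x ∧ AnalyticAt ℂ (g k) x ∧ AnalyticAt ℂ (h k) x)) ∧
  f 0 = (fun x => -I * q x) ∧
  g 0 = (fun _ => (1 : ℂ)) ∧
  h 0 = (fun x => I * p x) ∧
  ZeroCurvOn p q n f g h S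

/-- `(p,q)` is a meromorphic algebro-geometric AKNS potential. -/
def IsAGAKNS (p q : ℂ → ℂ) : Prop :=
  ∃ n f g h S, IsAGData p q n f g h S

/-- `(ψ₁, ψ₂)` is a solution of the AKNS system `JΨ' + QΨ = EΨ` on `ℂ`
(away from a closed countable exceptional set). -/
def SolvesAKNS (p q : ℂ → ℂ) (E : ℂ) (ψ₁ ψ₂ : ℂ → ℂ) : Prop :=
  ∃ S : Set ℂ, S.Countable ∧ IsClosed S ∧ ∀ x ∉ S,
    DifferentiableAt ℂ ψ₁ x ∧ DifferentiableAt ℂ ψ₂ x ∧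
    I * deriv ψ₁ x - I * q x * ψ₂ x = E * ψ₁ x ∧
    -I * deriv ψ₂ x + I * p x * ψ₁ x = E * ψ₂ x

/-- The AKNS system with potentials `(p,q)` and spectral parameter `E` admits two solutions,
each meromorphic on all of `ℂ`, with Wronskian `ψ₁₁ψ₂₂ - ψ₁₂ψ₂₁` not identically zero. -/
def MeroFundSys (p q : ℂ → ℂ) (E : ℂ) : Prop :=
  ∃ ψ₁₁ ψ₁₂ ψ₂₁ ψ₂₂ : ℂ → ℂ,
    MeromorphicOn ψ₁₁ Set.univ ∧ MeromorphicOn ψ₁₂ Set.univ ∧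
    MeromorphicOn ψ₂₁ Set.univ ∧ MeromorphicOn ψ₂₂ Set.univ ∧
    SolvesAKNS p q E ψ₁₁ ψ₁₂ ∧ SolvesAKNS p q E ψ₂₁ ψ₂₂ ∧
    ∃ x, ψ₁₁ x * ψ₂₂ x - ψ₁₂ x * ψ₂₁ x ≠ 0

/-- `f` is elliptic with fundamental periods `2ω₁`, `2ω₃`: meromorphic on `ℂ`
and doubly periodic. -/
def IsEllipticWith (ω₁ ω₃ : ℂ) (f : ℂ → ℂ) : Prop :=
  MeromorphicOn f Set.univ ∧
  (∀ z, f (z + 2 * ω₁) = f z) ∧ (∀ z, f (z + 2 * ω₃) = f z)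

open Filter Set Metric
open scoped Topology

theorem isPreconnected_ball_diff_center {E : Type*} [NormedAddCommGroup E] [NormedSpace ℝ E]
    (hE : 1 < Module.rank ℝ E) (x : E) (r : ℝ) : IsPreconnected (ball x r \ {x}) := by
  rcases le_or_gt r 0 with hr | hr
  · simp [ball_eq_empty.2 hr, isPreconnected_empty]
  let e := OpenPartialHomeomorph.univBall x r
  have he : Function.Injective e := fun a b hab => e.injOn (by simp [e]) (by simp [e]) hab
  have himage : e '' {0}ᶜ = ball x r \ {x} := by
    rw [compl_eq_univ_sdiff, image_sdiff he, ← OpenPartialHomeomorph.univBall_source x r,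
      e.image_source_eq_target, OpenPartialHomeomorph.univBall_target x hr, image_singleton,
      OpenPartialHomeomorph.univBall_apply_zero]
  rw [← himage]
  exact ((isPathConnected_compl_singleton_of_one_lt_rank hE 0).image
    (OpenPartialHomeomorph.continuous_univBall x r)).isConnected.isPreconnected

theorem Set.EqOn.of_diff_countable {E Y : Type*} [NormedAddCommGroup E] [NormedSpace ℝ E]
    [Nontrivial E] [TopologicalSpace Y] [T2Space Y] {f g : E → Y} {U S : Set E} (hU : IsOpen U)
    (hS : S.Countable) (hf : ContinuousOn f U) (hg : ContinuousOn g U) (h : EqOn f g (U \ S)) :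
    EqOn f g U :=
  h.of_subset_closure hf hg sdiff_subset ((hS.dense_compl ℝ).open_subset_closure_inter hU)

/-- The order bookkeeping of the main argument: `a, b, u, v, w` stand for the orders of
`p, q, F, G, H` at `x₀`. -/
theorem WithTop.neg_two_le_add_or_eq_top {a b u v w : WithTop ℤ} (hc : v + v = u + w)
    (hu : u ≤ b + v + 1) (hw : w ≤ a + v + 1) (hv : v = ⊤ → a + u = b + w) :
    ((-2 : ℤ) : WithTop ℤ) ≤ a + b ∨ u = ⊤ ∧ v = ⊤ ∧ w = ⊤ := by
  induction a using WithTop.recTopCoe <;> induction b using WithTop.recTopCoe <;>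
    induction u using WithTop.recTopCoe <;> induction v using WithTop.recTopCoe <;>
    induction w using WithTop.recTopCoe <;>
    simp only [← WithTop.coe_add, ← WithTop.coe_one, WithTop.coe_le_coe, WithTop.coe_inj,
      WithTop.add_top, WithTop.top_add, WithTop.coe_ne_top, WithTop.top_ne_coe, le_top,
      top_le_iff, true_or, or_true, and_true, true_and, imp_false, not_true] at *
  omega

section Analytic

variable {𝕜 E : Type*} [NontriviallyNormedField 𝕜] [NormedAddCommGroup E] [NormedSpace 𝕜 E]

theorem AnalyticOnNhd.eqOn_zero_of_eventually_nhdsNE {f : 𝕜 → E} {U : Set 𝕜} {x₀ : 𝕜}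
    (hf : AnalyticOnNhd 𝕜 f U) (hU : IsPreconnected U) (hUx : U ∈ 𝓝[≠] x₀)
    (h : ∀ᶠ x in 𝓝[≠] x₀, f x = 0) : EqOn f 0 U := by
  obtain ⟨z, ⟨hz, hzU⟩, hzx⟩ := (((eventually_eventually_nhdsWithin.2 h).and hUx).and
    self_mem_nhdsWithin).exists
  rw [isOpen_compl_singleton.nhdsWithin_eq hzx] at hz
  exact hf.eqOn_zero_of_preconnected_of_eventuallyEq_zero hU hzU hz

theorem meromorphicOrderAt_add_eq_of_mul_add_mul_eq_zero {f g u v : 𝕜 → 𝕜} {x : 𝕜}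
    (hf : MeromorphicAt f x) (hg : MeromorphicAt g x) (hu : MeromorphicAt u x)
    (hv : MeromorphicAt v x) (h : ∀ᶠ z in 𝓝[≠] x, f z * u z + g z * v z = 0) :
    meromorphicOrderAt f x + meromorphicOrderAt u x =
      meromorphicOrderAt g x + meromorphicOrderAt v x := by
  rw [← meromorphicOrderAt_mul hf hu, ← meromorphicOrderAt_mul hg hv, meromorphicOrderAt_neg]
  exact meromorphicOrderAt_congr <| h.mono fun z hz => by
    simp only [Pi.neg_apply, Pi.mul_apply]
    linear_combination -hz

variable [CharZero 𝕜] [CompleteSpace E] {f : 𝕜 → E} {x : 𝕜}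

theorem meromorphicOrderAt_le_meromorphicOrderAt_deriv_add_one (hf : MeromorphicAt f x) :
    meromorphicOrderAt f x ≤ meromorphicOrderAt (deriv f) x + 1 := by
  cases hn : meromorphicOrderAt f x with
  | top =>
    have hf0 : f =ᶠ[𝓝[≠] x] 0 := meromorphicOrderAt_eq_top_iff.1 hn
    rw [meromorphicOrderAt_congr hf0.nhdsNE_deriv]
    simp [meromorphicOrderAt_eq_top_iff]
  | coe n =>
    rcases eq_or_ne n 0 with rfl | hn0
    · obtain ⟨g, hg, hfg⟩ := hf.meromorphicOrderAt_nonneg_iff.1 hn.ge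
      rw [meromorphicOrderAt_congr hfg.nhdsNE_deriv]
      exact le_add_of_nonneg_of_le hg.deriv.meromorphicOrderAt_nonneg zero_le_one
    · rw [meromorphicOrderAt_deriv_eq_sub_one (by exact_mod_cast hn0) hn]
      norm_cast
      omega

theorem meromorphicOrderAt_le_add_add_one_of_deriv_eq [CompleteSpace 𝕜] {f u v : 𝕜 → 𝕜}
    (hf : MeromorphicAt f x) (hu : MeromorphicAt u x) (hv : MeromorphicAt v x) {c d : 𝕜}
    (hd : d ≠ 0) (h : ∀ᶠ z in 𝓝[≠] x, deriv f z = c * f z + d * u z * v z) :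
    meromorphicOrderAt f x ≤ meromorphicOrderAt u x + meromorphicOrderAt v x + 1 := by
  have huv : meromorphicOrderAt u x + meromorphicOrderAt v x =
      meromorphicOrderAt (deriv f + (fun _ => -c) * f) x := by
    rw [← meromorphicOrderAt_mul hu hv, ← meromorphicOrderAt_mul_of_ne_zero analyticAt_const hd]
    exact meromorphicOrderAt_congr <| h.mono fun z hz => by
      simp only [Pi.add_apply, Pi.mul_apply, hz]
      ring
  have hcf : meromorphicOrderAt f x ≤ meromorphicOrderAt ((fun _ => -c) * f) x := by
    rw [meromorphicOrderAt_mul (MeromorphicAt.const (-c) x) hf]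
    exact le_add_of_nonneg_left analyticAt_const.meromorphicOrderAt_nonneg
  calc meromorphicOrderAt f x
      ≤ min (meromorphicOrderAt (deriv f) x) (meromorphicOrderAt ((fun _ => -c) * f) x) + 1 := by
        rw [← min_add_add_right]
        exact le_min (meromorphicOrderAt_le_meromorphicOrderAt_deriv_add_one hf)
          (hcf.trans (le_add_of_nonneg_right zero_le_one))
    _ ≤ _ := by
        rw [huv]
        gcongr
        exact meromorphicOrderAt_add hf.deriv ((MeromorphicAt.const (-c) x).mul hf)

end Analytic

section akPoly

variable {n : ℕ} {f : ℕ → ℂ → ℂ}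

theorem akPoly_zero (f : ℕ → ℂ → ℂ) (E x : ℂ) : akPoly 0 f E x = f 0 x := by
  simp [akPoly]

theorem akPoly_succ (n : ℕ) (f : ℕ → ℂ → ℂ) (E x : ℂ) :
    akPoly (n + 1) f E x = E * akPoly n f E x + f (n + 1) x := by
  rw [akPoly, Finset.sum_range_succ', akPoly, Finset.mul_sum]
  simp only [Nat.sub_zero, pow_zero, mul_one, Nat.add_sub_add_right]
  congr 1
  exact Finset.sum_congr rfl fun ℓ _ => by ring

def akQuot (f : ℕ → ℂ → ℂ) (E₀ : ℂ) : ℕ → ℂ → ℂ := fun k x => akPoly k f E₀ x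

theorem akPoly_succ_eq_sub_mul_akQuot (n : ℕ) (f : ℕ → ℂ → ℂ) (E E₀ x : ℂ) :
    akPoly (n + 1) f E x = (E - E₀) * akPoly n (akQuot f E₀) E x + akPoly (n + 1) f E₀ x := by
  induction n with
  | zero => simp only [akPoly_succ, akPoly_zero, akQuot]; ring
  | succ m ih =>
    rw [akPoly_succ (m + 1) f E, ih, akPoly_succ m (akQuot f E₀), akPoly_succ (m + 1) f E₀,
      akQuot]
    ring

@[fun_prop]
theorem continuous_akPoly (n : ℕ) (f : ℕ → ℂ → ℂ) (x : ℂ) : Continuous fun E => akPoly n f E x := by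
  unfold akPoly
  fun_prop

theorem analyticOnNhd_akPoly {U : Set ℂ} (hf : ∀ k ≤ n, AnalyticOnNhd ℂ (f k) U) (E : ℂ) :
    AnalyticOnNhd ℂ (fun x => akPoly n f E x) U :=
  Finset.analyticOnNhd_fun_sum _ fun ℓ _ =>
    (hf (n - ℓ) (Nat.sub_le n ℓ)).mul analyticOnNhd_const

theorem meromorphicAt_akPoly {x : ℂ} (hf : ∀ k ≤ n, MeromorphicAt (f k) x) (E : ℂ) :
    MeromorphicAt (fun x => akPoly n f E x) x :=
  MeromorphicAt.fun_sum fun ℓ _ => (hf (n - ℓ) (Nat.sub_le n ℓ)).mul (MeromorphicAt.const _ x)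

theorem deriv_akPoly {x : ℂ} (hf : ∀ k ≤ n, DifferentiableAt ℂ (f k) x) (E : ℂ) :
    deriv (fun y => akPoly n f E y) x = akPoly n (fun k => deriv (f k)) E x := by
  unfold akPoly
  rw [deriv_fun_sum fun ℓ _ => (hf (n - ℓ) (Nat.sub_le n ℓ)).mul_const _]
  exact Finset.sum_congr rfl fun ℓ _ => deriv_mul_const (hf (n - ℓ) (Nat.sub_le n ℓ)) _

open Polynomial in
def akPolynomial (n : ℕ) (a : ℕ → ℂ) : ℂ[X] :=
  ∑ ℓ ∈ Finset.range (n + 1), C (a (n - ℓ)) * X ^ ℓ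

open Polynomial in
theorem eval_akPolynomial (n : ℕ) (f : ℕ → ℂ → ℂ) (E x : ℂ) :
    (akPolynomial n fun k => f k x).eval E = akPoly n f E x := by
  simp [akPolynomial, akPoly, eval_finsetSum]

theorem natDegree_akPolynomial_le (n : ℕ) (a : ℕ → ℂ) : (akPolynomial n a).natDegree ≤ n :=
  Polynomial.natDegree_sum_le_of_forall_le _ _ fun _ hℓ =>
    (Polynomial.natDegree_C_mul_X_pow_le _ _).trans (Finset.mem_range_succ_iff.1 hℓ)

theorem natDegree_akPolynomial {a : ℕ → ℂ} (ha : a 0 ≠ 0) : (akPolynomial n a).natDegree = n :=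
  Polynomial.natDegree_eq_of_le_of_coeff_ne_zero (natDegree_akPolynomial_le n a) <| by
    simpa [akPolynomial, Polynomial.finsetSum_coeff, Polynomial.coeff_C_mul_X_pow] using ha

open Polynomial in
theorem exists_akPoly_sq_eq_mul (f g h : ℕ → ℂ → ℂ) {x : ℂ} (hg : g 0 x = 1) :
    ∃ E, akPoly (n + 1) g E x ^ 2 = akPoly n f E x * akPoly n h E x := by
  set G := akPolynomial (n + 1) fun k => g k x
  set F := akPolynomial n fun k => f k x
  set H := akPolynomial n fun k => h k x
  have hG : G.natDegree = n + 1 := natDegree_akPolynomial (by simp [hg])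
  have hlt : (F * H).natDegree < (G ^ 2).natDegree := by
    rw [natDegree_pow, hG]
    linarith [natDegree_mul_le (p := F) (q := H), natDegree_akPolynomial_le n fun k => f k x,
      natDegree_akPolynomial_le n fun k => h k x]
  obtain ⟨E, hE⟩ := Complex.exists_root (f := G ^ 2 - F * H) <| by
    rw [← natDegree_pos_iff_degree_pos, natDegree_sub_eq_left_of_natDegree_lt hlt]
    exact lt_of_le_of_lt (Nat.zero_le _) hlt
  refine ⟨E, sub_eq_zero.1 ?_⟩
  simpa [G, F, H, eval_akPolynomial] using hE

end akPoly

section ZeroCurv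

variable {p q : ℂ → ℂ} {n : ℕ} {f g h : ℕ → ℂ → ℂ}

theorem ZeroCurvOn.deriv_sq_sub_mul_eq_zero {S : Set ℂ} (hzc : ZeroCurvOn p q n f g h S) {E x : ℂ}
    (hx : x ∉ S) (hF : DifferentiableAt ℂ (fun y => akPoly n f E y) x)
    (hG : DifferentiableAt ℂ (fun y => akPoly (n + 1) g E y) x)
    (hH : DifferentiableAt ℂ (fun y => akPoly n h E y) x) :
    deriv (fun y => akPoly (n + 1) g E y ^ 2 - akPoly n f E y * akPoly n h E y) x = 0 := by
  obtain ⟨hF', hG', hH'⟩ := hzc E x hx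
  rw [deriv_fun_sub (hG.fun_pow 2) (hF.fun_mul hH), deriv_fun_pow hG, deriv_fun_mul hF hH,
    hF', hG', hH']
  ring

theorem ZeroCurvOn.compl_of_countable {S U : Set ℂ} (hzc : ZeroCurvOn p q n f g h S)
    (hS : S.Countable) (hU : IsOpen U) (hp : ContinuousOn p U) (hq : ContinuousOn q U)
    (hf : ∀ k ≤ n, AnalyticOnNhd ℂ (f k) U) (hg : ∀ k ≤ n + 1, AnalyticOnNhd ℂ (g k) U)
    (hh : ∀ k ≤ n, AnalyticOnNhd ℂ (h k) U) : ZeroCurvOn p q n f g h Uᶜ := by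
  intro E x hx
  rw [notMem_compl_iff] at hx
  have hF := analyticOnNhd_akPoly hf E
  have hG := analyticOnNhd_akPoly hg E
  have hH := analyticOnNhd_akPoly hh E
  have extend {u v : ℂ → ℂ} (hu : ContinuousOn u U) (hv : ContinuousOn v U)
      (huv : ∀ y ∈ U \ S, u y = v y) : u x = v x :=
    EqOn.of_diff_countable hU hS hu hv huv hx
  refine ⟨extend hF.deriv.continuousOn ?_ fun y hy => (hzc E y hy.2).1,
    extend hG.deriv.continuousOn ?_ fun y hy => (hzc E y hy.2).2.1,
    extend hH.deriv.continuousOn ?_ fun y hy => (hzc E y hy.2).2.2⟩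
  · exact (continuousOn_const.mul hF.continuousOn).add
      ((continuousOn_const.mul hq).mul hG.continuousOn)
  · exact (hp.mul hF.continuousOn).add (hq.mul hH.continuousOn)
  · exact (continuousOn_const.mul hH.continuousOn).add
      ((continuousOn_const.mul hp).mul hG.continuousOn)

end ZeroCurv

theorem deriv_eq_of_eventuallyEq_sub_mul {P Q : ℂ → ℂ → ℂ} {R : ℂ → ℂ} {x E₀ : ℂ}
    (hP : ∀ E, P E =ᶠ[𝓝 x] fun z => (E - E₀) * Q E z)
    (hPR : ∀ E, deriv (P E) x = (E - E₀) * R E)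
    (hQ : Continuous fun E => deriv (Q E) x) (hR : Continuous R) (E : ℂ) :
    deriv (Q E) x = R E := by
  refine congrFun (Continuous.ext_on (dense_compl_singleton E₀) hQ hR fun E hE => ?_) E
  have hE : E - E₀ ≠ 0 := sub_ne_zero.2 hE
  have hQP : Q E =ᶠ[𝓝 x] fun z => (E - E₀)⁻¹ * P E z :=
    (hP E).mono fun z hz => by simp only [hz, inv_mul_cancel_left₀ hE]
  simp only [hQP.deriv_eq, deriv_const_mul_field', hPR, inv_mul_cancel_left₀ hE]

structure AKNSDataOn (p q : ℂ → ℂ) (x₀ : ℂ) (U : Set ℂ) (n : ℕ) (f g h : ℕ → ℂ → ℂ) :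
    Prop where
  meromorphicAt_f : ∀ k ≤ n, MeromorphicAt (f k) x₀
  meromorphicAt_g : ∀ k ≤ n + 1, MeromorphicAt (g k) x₀
  meromorphicAt_h : ∀ k ≤ n, MeromorphicAt (h k) x₀
  analyticOnNhd_f : ∀ k ≤ n, AnalyticOnNhd ℂ (f k) U
  analyticOnNhd_g : ∀ k ≤ n + 1, AnalyticOnNhd ℂ (g k) U
  analyticOnNhd_h : ∀ k ≤ n, AnalyticOnNhd ℂ (h k) U
  f_zero : EqOn (f 0) (fun x => -I * q x) U
  g_zero : EqOn (g 0) 1 U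
  zeroCurvOn : ZeroCurvOn p q n f g h Uᶜ

namespace AKNSDataOn

variable {p q : ℂ → ℂ} {x₀ : ℂ} {U : Set ℂ} {n : ℕ} {f g h : ℕ → ℂ → ℂ}

theorem exists_sq_eq_mul (hd : AKNSDataOn p q x₀ U n f g h) (hU : IsOpen U)
    (hUc : IsPreconnected U) (hne : U.Nonempty) :
    ∃ E₀, ∀ x ∈ U, akPoly (n + 1) g E₀ x ^ 2 = akPoly n f E₀ x * akPoly n h E₀ x := by
  obtain ⟨x₁, hx₁⟩ := hne
  obtain ⟨E₀, hE₀⟩ := exists_akPoly_sq_eq_mul (n := n) f g h (hd.g_zero hx₁)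
  refine ⟨E₀, fun x hx => sub_eq_zero.1 ?_⟩
  have hF := analyticOnNhd_akPoly hd.analyticOnNhd_f E₀
  have hG := analyticOnNhd_akPoly hd.analyticOnNhd_g E₀
  have hH := analyticOnNhd_akPoly hd.analyticOnNhd_h E₀
  rw [hU.is_const_of_deriv_eq_zero (f := fun y =>
      akPoly (n + 1) g E₀ y ^ 2 - akPoly n f E₀ y * akPoly n h E₀ y) hUc
    ((hG.pow 2).sub (hF.mul hH)).differentiableOn
    (fun y hy => hd.zeroCurvOn.deriv_sq_sub_mul_eq_zero (notMem_compl_iff.2 hy)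
      (hF y hy).differentiableAt (hG y hy).differentiableAt (hH y hy).differentiableAt) hx hx₁,
    hE₀, sub_self]

theorem reduce (hd : AKNSDataOn p q x₀ U (n + 1) f g h) (hU : IsOpen U) {E₀ : ℂ}
    (hF : EqOn (fun x => akPoly (n + 1) f E₀ x) 0 U)
    (hG : EqOn (fun x => akPoly (n + 1 + 1) g E₀ x) 0 U)
    (hH : EqOn (fun x => akPoly (n + 1) h E₀ x) 0 U) :
    AKNSDataOn p q x₀ U n (akQuot f E₀) (akQuot g E₀) (akQuot h E₀) := by
  have hf : ∀ k ≤ n, AnalyticOnNhd ℂ (akQuot f E₀ k) U := fun k hk =>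
    analyticOnNhd_akPoly (fun j hj => hd.analyticOnNhd_f j (by omega)) E₀
  have hg : ∀ k ≤ n + 1, AnalyticOnNhd ℂ (akQuot g E₀ k) U := fun k hk =>
    analyticOnNhd_akPoly (fun j hj => hd.analyticOnNhd_g j (by omega)) E₀
  have hh : ∀ k ≤ n, AnalyticOnNhd ℂ (akQuot h E₀ k) U := fun k hk =>
    analyticOnNhd_akPoly (fun j hj => hd.analyticOnNhd_h j (by omega)) E₀
  refine ⟨fun k hk => meromorphicAt_akPoly (fun j hj => hd.meromorphicAt_f j (by omega)) E₀,
    fun k hk => meromorphicAt_akPoly (fun j hj => hd.meromorphicAt_g j (by omega)) E₀,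
    fun k hk => meromorphicAt_akPoly (fun j hj => hd.meromorphicAt_h j (by omega)) E₀,
    hf, hg, hh, fun x hx => by simp [akQuot, akPoly_zero, hd.f_zero hx],
    fun x hx => by simp [akQuot, akPoly_zero, hd.g_zero hx], fun E x hx => ?_⟩
  rw [notMem_compl_iff] at hx
  have factor {m : ℕ} {φ : ℕ → ℂ → ℂ} (hφ : EqOn (fun x => akPoly (m + 1) φ E₀ x) 0 U)
      (E : ℂ) {z : ℂ} (hz : z ∈ U) :
      akPoly (m + 1) φ E z = (E - E₀) * akPoly m (akQuot φ E₀) E z := by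
    rw [akPoly_succ_eq_sub_mul_akQuot m φ E E₀, show akPoly (m + 1) φ E₀ z = 0 from hφ hz,
      add_zero]
  have factor_nhds {m : ℕ} {φ : ℕ → ℂ → ℂ} (hφ : EqOn (fun x => akPoly (m + 1) φ E₀ x) 0 U)
      (E : ℂ) : (fun z => akPoly (m + 1) φ E z) =ᶠ[𝓝 x]
        fun z => (E - E₀) * akPoly m (akQuot φ E₀) E z :=
    eventually_of_mem (hU.mem_nhds hx) fun z hz => factor hφ E hz
  have continuous_deriv {m : ℕ} {φ : ℕ → ℂ → ℂ} (hφ : ∀ k ≤ m, AnalyticOnNhd ℂ (φ k) U) :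
      Continuous fun E => deriv (fun z => akPoly m φ E z) x := by
    simp only [deriv_akPoly fun k hk => (hφ k hk x hx).differentiableAt]
    fun_prop
  have zc E := hd.zeroCurvOn E x (notMem_compl_iff.2 hx)
  refine ⟨deriv_eq_of_eventuallyEq_sub_mul (factor_nhds hF) (R := fun E =>
      -2 * I * E * akPoly n (akQuot f E₀) E x + 2 * q x * akPoly (n + 1) (akQuot g E₀) E x)
      (fun E => ?_) (continuous_deriv hf) (by fun_prop) E,
    deriv_eq_of_eventuallyEq_sub_mul (factor_nhds hG) (R := fun E =>
      p x * akPoly n (akQuot f E₀) E x + q x * akPoly n (akQuot h E₀) E x)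
      (fun E => ?_) (continuous_deriv hg) (by fun_prop) E,
    deriv_eq_of_eventuallyEq_sub_mul (factor_nhds hH) (R := fun E =>
      2 * I * E * akPoly n (akQuot h E₀) E x + 2 * p x * akPoly (n + 1) (akQuot g E₀) E x)
      (fun E => ?_) (continuous_deriv hh) (by fun_prop) E⟩
  · rw [(zc E).1, factor hF E hx, factor hG E hx]; ring
  · rw [(zc E).2.1, factor hF E hx, factor hH E hx]; ring
  · rw [(zc E).2.2, factor hH E hx, factor hG E hx]; ring

theorem neg_two_le_or_eventually_eq_zero (hd : AKNSDataOn p q x₀ U n f g h)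
    (hUx : U ∈ 𝓝[≠] x₀) (hp : MeromorphicAt p x₀) (hq : MeromorphicAt q x₀) {E₀ : ℂ}
    (hE₀ : ∀ x ∈ U, akPoly (n + 1) g E₀ x ^ 2 = akPoly n f E₀ x * akPoly n h E₀ x) :
    ((-2 : ℤ) : WithTop ℤ) ≤ meromorphicOrderAt p x₀ + meromorphicOrderAt q x₀ ∨
      (∀ᶠ x in 𝓝[≠] x₀, akPoly n f E₀ x = 0) ∧ (∀ᶠ x in 𝓝[≠] x₀, akPoly (n + 1) g E₀ x = 0) ∧
        ∀ᶠ x in 𝓝[≠] x₀, akPoly n h E₀ x = 0 := by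
  have hF := meromorphicAt_akPoly hd.meromorphicAt_f E₀
  have hG := meromorphicAt_akPoly hd.meromorphicAt_g E₀
  have hH := meromorphicAt_akPoly hd.meromorphicAt_h E₀
  have zc : ∀ᶠ x in 𝓝[≠] x₀, _ := mem_of_superset hUx fun x hx =>
    hd.zeroCurvOn E₀ x (notMem_compl_iff.2 hx)
  have hGG : meromorphicOrderAt (fun x => akPoly (n + 1) g E₀ x) x₀ +
      meromorphicOrderAt (fun x => akPoly (n + 1) g E₀ x) x₀ =
      meromorphicOrderAt (fun x => akPoly n f E₀ x) x₀ +
      meromorphicOrderAt (fun x => akPoly n h E₀ x) x₀ := by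
    rw [← meromorphicOrderAt_mul hG hG, ← meromorphicOrderAt_mul hF hH]
    exact meromorphicOrderAt_congr <| mem_of_superset hUx fun x hx => by
      simpa [sq] using hE₀ x hx
  have hFq := meromorphicOrderAt_le_add_add_one_of_deriv_eq hF hq hG two_ne_zero
    (zc.mono fun x hx => hx.1)
  have hHp := meromorphicOrderAt_le_add_add_one_of_deriv_eq hH hp hG two_ne_zero
    (zc.mono fun x hx => hx.2.2)
  have hGtop (hGt : meromorphicOrderAt (fun x => akPoly (n + 1) g E₀ x) x₀ = ⊤) :=
    meromorphicOrderAt_add_eq_of_mul_add_mul_eq_zero hp hq hF hH <| by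
      have hG0 : (fun x => akPoly (n + 1) g E₀ x) =ᶠ[𝓝[≠] x₀] 0 :=
        meromorphicOrderAt_eq_top_iff.1 hGt
      filter_upwards [zc, hG0.nhdsNE_deriv] with x hx hG'
      rw [← hx.2.1, hG', Pi.zero_def, deriv_const]
  rcases WithTop.neg_two_le_add_or_eq_top hGG hFq hHp hGtop with hle | ⟨hFt, hGt, hHt⟩
  · exact Or.inl hle
  · exact Or.inr ⟨meromorphicOrderAt_eq_top_iff.1 hFt, meromorphicOrderAt_eq_top_iff.1 hGt,
      meromorphicOrderAt_eq_top_iff.1 hHt⟩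

theorem neg_two_le_meromorphicOrderAt_add (hd : AKNSDataOn p q x₀ U n f g h) (hU : IsOpen U)
    (hUc : IsPreconnected U) (hUx : U ∈ 𝓝[≠] x₀) (hp : MeromorphicAt p x₀)
    (hq : MeromorphicAt q x₀) :
    ((-2 : ℤ) : WithTop ℤ) ≤ meromorphicOrderAt p x₀ + meromorphicOrderAt q x₀ := by
  induction n generalizing f g h with
  | zero =>
    obtain ⟨E₀, hE₀⟩ := hd.exists_sq_eq_mul hU hUc (nonempty_of_mem hUx)
    rcases hd.neg_two_le_or_eventually_eq_zero hUx hp hq hE₀ with hle | ⟨hF, -, -⟩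
    · exact hle
    have hq0 : meromorphicOrderAt q x₀ = ⊤ := meromorphicOrderAt_eq_top_iff.2 <|
      (hF.and hUx).mono fun x ⟨hx, hxU⟩ => by
        simpa [akPoly_zero, hd.f_zero hxU, I_ne_zero] using hx
    simp [hq0]
  | succ n ih =>
    obtain ⟨E₀, hE₀⟩ := hd.exists_sq_eq_mul hU hUc (nonempty_of_mem hUx)
    rcases hd.neg_two_le_or_eventually_eq_zero hUx hp hq hE₀ with hle | ⟨hF, hG, hH⟩
    · exact hle
    exact ih (hd.reduce hU
      ((analyticOnNhd_akPoly hd.analyticOnNhd_f E₀).eqOn_zero_of_eventually_nhdsNE hUc hUx hF)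
      ((analyticOnNhd_akPoly hd.analyticOnNhd_g E₀).eqOn_zero_of_eventually_nhdsNE hUc hUx hG)
      ((analyticOnNhd_akPoly hd.analyticOnNhd_h E₀).eqOn_zero_of_eventually_nhdsNE hUc hUx hH))

end AKNSDataOn

theorem order_sum_ge_neg_two_general
    (p q : ℂ → ℂ)
    (h : IsAGAKNS p q)
    (x₀ : ℂ) :
    ((-2 : ℤ) : WithTop ℤ) ≤
      meromorphicOrderAt p x₀ + meromorphicOrderAt q x₀ := by
  obtain ⟨n, f, g, h, S, hp, hq, hf, hg, hh, hS, -, -, hf0, hg0, -, hzc⟩ := h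
  obtain ⟨ε, hε, hball⟩ := Metric.mem_nhdsWithin_iff.1 <|
    (hp x₀ trivial).eventually_analyticAt.and <| (hq x₀ trivial).eventually_analyticAt.and <|
      (Finset.range (n + 2)).eventually_all.2 fun k _ =>
        (hf k x₀ trivial).eventually_analyticAt.and <|
          (hg k x₀ trivial).eventually_analyticAt.and (hh k x₀ trivial).eventually_analyticAt
  set U := ball x₀ ε \ {x₀}
  have hU : IsOpen U := isOpen_ball.sdiff isClosed_singleton
  have hf' : ∀ k ≤ n, AnalyticOnNhd ℂ (f k) U := fun k hk x hx =>
    ((hball hx).2.2 k (by simp; omega)).1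
  have hg' : ∀ k ≤ n + 1, AnalyticOnNhd ℂ (g k) U := fun k hk x hx =>
    ((hball hx).2.2 k (by simp; omega)).2.1
  have hh' : ∀ k ≤ n, AnalyticOnNhd ℂ (h k) U := fun k hk x hx =>
    ((hball hx).2.2 k (by simp; omega)).2.2
  have hd : AKNSDataOn p q x₀ U n f g h :=
    ⟨fun k _ => hf k x₀ trivial, fun k _ => hg k x₀ trivial, fun k _ => hh k x₀ trivial,
      hf', hg', hh', fun x _ => congrFun hf0 x, fun x _ => congrFun hg0 x,
      hzc.compl_of_countable hS hU (fun x hx => (hball hx).1.continuousAt.continuousWithinAt)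
        (fun x hx => (hball hx).2.1.continuousAt.continuousWithinAt) hf' hg' hh'⟩
  exact hd.neg_two_le_meromorphicOrderAt_add hU
    (isPreconnected_ball_diff_center (by simp [Complex.rank_real_complex]) x₀ ε)
    (sdiff_mem_nhdsWithin_compl (ball_mem_nhds x₀ hε) _) (hp x₀ trivial) (hq x₀ trivial)

/-- If `(p,q)` is a meromorphic algebro-geometric AKNS potential with `p`
and `q` not identically zero, then `ord_{x₀}(p) + ord_{x₀}(q) ≥ -2` at every `x₀ ∈ ℂ`. -/
theorem order_sum_ge_neg_two
    (p q : ℂ → ℂ)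
    (hpm : MeromorphicOn p Set.univ) (hqm : MeromorphicOn q Set.univ)
    (h : IsAGAKNS p q)
    (hp0 : ∃ x, p x ≠ 0) (hq0 : ∃ x, q x ≠ 0)
    (x₀ : ℂ) :
    ((-2 : ℤ) : WithTop ℤ) ≤
      meromorphicOrderAt p x₀ + meromorphicOrderAt q x₀ :=
  order_sum_ge_neg_two_general p q h x₀
end
end

section
/- (Gauge transformations preserve meromorphic algebro-geometric AKNS potentials.) Suppose (p,q) is a meromorphic algebro-geometric AKNS potential, fix Ẽ ∈ ℂ, and let φ⁰ be a function meromorphic on ℂ satisfying the Riccati equation (φ⁰)' = p − q (φ⁰)² + 2 i Ẽ φ⁰ (equivalently, φ⁰ = ψ₂⁰/ψ₁⁰ for a solution Ψ⁰ = (ψ₁⁰, ψ₂⁰)ᵗ of the AKNS system with potentials (p,q) at spectral parameter Ẽ). Define p̃ = φ⁰ and q̃ = −q' − 2 i Ẽ q + q² φ⁰. Then (p̃, q̃) is a meromorphic algebro-geometric AKNS potential. -/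
open Complex

noncomputable section

section AKNSAuxSection

namespace AKNSAux

/-- shift a coefficient sequence up by one (the new top coefficient is `0`). -/
def liftSeq (F : ℕ → ℂ → ℂ) : ℕ → ℂ → ℂ
  | 0 => fun _ => 0
  | (j+1) => F j

lemma akPoly_succ' (m : ℕ) (F : ℕ → ℂ → ℂ) (E x : ℂ) :
    akPoly (m+1) F E x = E * akPoly m F E x + F (m+1) x := by
  rw [akPoly, Finset.sum_range_succ', akPoly, Finset.mul_sum]
  simp only [Nat.succ_sub_succ, Nat.sub_zero, pow_zero, mul_one]
  congr 1
  exact Finset.sum_congr rfl fun i _ => by ring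

lemma akPoly_lift (m : ℕ) (F : ℕ → ℂ → ℂ) (E x : ℂ) :
    akPoly (m+1) (liftSeq F) E x = akPoly m F E x := by
  rw [akPoly, Finset.sum_range_succ, akPoly]
  have h1 : m + 1 - (m + 1) = 0 := by omega
  rw [h1]
  simp only [liftSeq, zero_mul, add_zero]
  refine Finset.sum_congr rfl fun i hi => ?_
  have hi' : i ≤ m := by simpa [Nat.lt_succ_iff] using hi
  have : m + 1 - i = (m - i) + 1 := by omega
  rw [this]

lemma akPoly_congr (m : ℕ) (F G : ℕ → ℂ → ℂ) (E x : ℂ)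
    (h : ∀ k ≤ m, F k x = G k x) :
    akPoly m F E x = akPoly m G E x := by
  refine Finset.sum_congr rfl fun i hi => ?_
  rw [h (m - i) (by omega)]

lemma akPoly_eshift (m : ℕ) (U : ℕ → ℂ → ℂ) (E x : ℂ) (h0 : U 0 x = 0) :
    akPoly m (fun k => if k = m then (fun _ => 0) else U (k+1)) E x
      = E * akPoly m U E x := by
  have hr : E * akPoly m U E x
      = ∑ ℓ ∈ Finset.range (m+1), U (m - ℓ) x * E ^ (ℓ+1) := by
    rw [akPoly, Finset.mul_sum]
    exact Finset.sum_congr rfl fun i _ => by ring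
  rw [hr, Finset.sum_range_succ, akPoly, Finset.sum_range_succ']
  have h1 : m - m = 0 := by omega
  have h2 : m - 0 = m := by omega
  rw [h1, h2, h0, if_pos rfl]
  simp only [zero_mul, add_zero]
  refine Finset.sum_congr rfl fun i hi => ?_
  have hi' : i < m := Finset.mem_range.mp hi
  have h3 : m - (i+1) ≠ m := by omega
  rw [if_neg h3]
  have h4 : m - (i + 1) + 1 = m - i := by omega
  rw [h4]

lemma akPoly_comb5 (m : ℕ) (c1 c2 c3 c4 c5 : ℂ → ℂ) (F1 F2 F3 F4 F5 : ℕ → ℂ → ℂ)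
    (E x : ℂ) :
    akPoly m (fun k y => c1 y * F1 k y + c2 y * F2 k y + c3 y * F3 k y
      + c4 y * F4 k y + c5 y * F5 k y) E x
    = c1 x * akPoly m F1 E x + c2 x * akPoly m F2 E x + c3 x * akPoly m F3 E x
      + c4 x * akPoly m F4 E x + c5 x * akPoly m F5 E x := by
  simp only [akPoly, Finset.mul_sum, ← Finset.sum_add_distrib]
  exact Finset.sum_congr rfl fun i _ => by ring

lemma akPoly_comb3 (m : ℕ) (c1 c2 c3 : ℂ → ℂ) (F1 F2 F3 : ℕ → ℂ → ℂ) (E x : ℂ) :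
    akPoly m (fun k y => c1 y * F1 k y + c2 y * F2 k y + c3 y * F3 k y) E x
    = c1 x * akPoly m F1 E x + c2 x * akPoly m F2 E x + c3 x * akPoly m F3 E x := by
  simp only [akPoly, Finset.mul_sum, ← Finset.sum_add_distrib]
  exact Finset.sum_congr rfl fun i _ => by ring

lemma akPoly_comb2 (m : ℕ) (c1 c2 : ℂ → ℂ) (F1 F2 : ℕ → ℂ → ℂ) (E x : ℂ) :
    akPoly m (fun k y => c1 y * F1 k y + c2 y * F2 k y) E x
    = c1 x * akPoly m F1 E x + c2 x * akPoly m F2 E x := by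
  simp only [akPoly, Finset.mul_sum, ← Finset.sum_add_distrib]
  exact Finset.sum_congr rfl fun i _ => by ring

lemma akPoly_top_split (m : ℕ) (F G : ℕ → ℂ → ℂ) (E x : ℂ)
    (h : ∀ k, k ≠ 0 → F k = G k) :
    akPoly m F E x = akPoly m G E x + (F 0 x - G 0 x) * E ^ m := by
  rw [akPoly, akPoly, Finset.sum_range_succ, Finset.sum_range_succ]
  have h1 : m - m = 0 := by omega
  rw [h1]
  have h2 : ∑ ℓ ∈ Finset.range m, F (m - ℓ) x * E ^ ℓ
      = ∑ ℓ ∈ Finset.range m, G (m - ℓ) x * E ^ ℓ := by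
    refine Finset.sum_congr rfl fun i hi => ?_
    have : m - i ≠ 0 := by have := Finset.mem_range.mp hi; omega
    rw [h _ this]
  rw [h2]; ring

/-- coefficient extraction from a vanishing polynomial function -/
lemma coeff_eq_zero (m : ℕ) (d : ℕ → ℂ)
    (h : ∀ E : ℂ, ∑ ℓ ∈ Finset.range m, d ℓ * E ^ ℓ = 0) :
    ∀ ℓ ∈ Finset.range m, d ℓ = 0 := by
  intro ℓ hℓ
  set P : Polynomial ℂ := ∑ j ∈ Finset.range m, Polynomial.C (d j) * Polynomial.X ^ j with hP
  have hev : ∀ E : ℂ, P.eval E = 0 := by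
    intro E
    rw [hP, Polynomial.eval_finset_sum]
    simpa using h E
  have hP0 : P = 0 := Polynomial.funext (fun r => by rw [hev r]; simp)
  have : P.coeff ℓ = d ℓ := by
    rw [hP, Polynomial.finset_sum_coeff]
    simp only [Polynomial.coeff_C_mul, Polynomial.coeff_X_pow]
    rw [Finset.sum_eq_single ℓ]
    · simp
    · intro b _ hb; simp [Ne.symm hb]
    · intro hb; exact absurd hℓ hb
  rw [← this, hP0]; simp

lemma akPoly_hasDerivAt (m : ℕ) (F : ℕ → ℂ → ℂ) (E x : ℂ)
    (hd : ∀ k, DifferentiableAt ℂ (F k) x) :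
    HasDerivAt (fun y => akPoly m F E y)
      (∑ ℓ ∈ Finset.range (m+1), deriv (F (m - ℓ)) x * E ^ ℓ) x := by
  apply HasDerivAt.fun_sum
  intro i _
  exact ((hd (m - i)).hasDerivAt).mul_const _


open Filter Topology in
lemma analyticAt_deriv {f : ℂ → ℂ} {x : ℂ} (h : AnalyticAt ℂ f x) :
    AnalyticAt ℂ (deriv f) x := by
  have : AnalyticOnNhd ℂ f {y | AnalyticAt ℂ f y} := fun y hy => hy
  exact this.deriv x h

open Filter Topology in
lemma MeromorphicAt.deriv'' {f : ℂ → ℂ} {x : ℂ} (hf : MeromorphicAt f x) :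
    MeromorphicAt (deriv f) x := by
  obtain ⟨m, hg⟩ := hf
  simp only [smul_eq_mul] at hg
  set g : ℂ → ℂ := fun z => (z - x) ^ m * f z with hgdef
  have hganx : AnalyticAt ℂ g x := hg
  set H : ℂ → ℂ := fun z =>
    deriv g z * ((z - x) ^ m)⁻¹ - (m : ℂ) * g z * ((z - x) ^ (m+1))⁻¹ with hHdef
  have hidm : MeromorphicAt (fun z : ℂ => z - x) x :=
    (MeromorphicAt.id x).sub (MeromorphicAt.const x x)
  have hHm : MeromorphicAt H x := by
    apply MeromorphicAt.sub
    · exact (analyticAt_deriv hganx).meromorphicAt.mul (hidm.pow m).inv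
    · exact (((MeromorphicAt.const (m : ℂ) x).mul hganx.meromorphicAt).mul
        (hidm.pow (m+1)).inv)
  apply hHm.congr
  have h1 : ∀ᶠ z in 𝓝[≠] x, AnalyticAt ℂ g z :=
    nhdsWithin_le_nhds hganx.eventually_analyticAt
  have h2 : ∀ᶠ z in 𝓝[≠] x, z ≠ x := by
    exact self_mem_nhdsWithin (s := ({x}ᶜ : Set ℂ))
  filter_upwards [h1, h2] with z hz hzx
  -- show H z = deriv f z
  have hzx' : z - x ≠ 0 := sub_ne_zero.mpr hzx
  have hev : (fun y => g y * ((y - x) ^ m)⁻¹) =ᶠ[𝓝 z] f := by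
    filter_upwards [compl_singleton_mem_nhds hzx] with y hy
    have hyx : y - x ≠ 0 := sub_ne_zero.mpr (by simpa using hy)
    rw [hgdef]
    field_simp
  have hdg : HasDerivAt g (deriv g z) z := hz.differentiableAt.hasDerivAt
  have hdp : HasDerivAt (fun y : ℂ => (y - x) ^ m)
      ((m : ℂ) * (z - x) ^ (m - 1) * 1) z :=
    ((hasDerivAt_id z).sub_const x).pow m
  have hdinv := hdp.inv (pow_ne_zero m hzx')
  have hdmul : HasDerivAt (fun y => g y * ((y - x) ^ m)⁻¹) (deriv g z * ((z - x) ^ m)⁻¹ + g z * (-(↑m * (z - x) ^ (m - 1) * 1) / ((z - x) ^ m) ^ 2)) z := hdg.mul hdinv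
  have : deriv f z = deriv (fun y => g y * ((y - x) ^ m)⁻¹) z :=
    (hev.deriv_eq).symm
  rw [hHdef, this, hdmul.deriv]
  rcases m with - | m'
  · simp
  · have hne1 : (z - x) ^ (m' + 1) ≠ 0 := pow_ne_zero _ hzx'
    have hne2 : (z - x) ^ (m' + 1 + 1) ≠ 0 := pow_ne_zero _ hzx'
    have hm1 : m' + 1 - 1 = m' := by omega
    rw [hm1]
    field_simp
    ring

open Filter Topology in
lemma countable_closed_of_isolated {S : Set ℂ}
    (h : ∀ x : ℂ, ∀ᶠ y in 𝓝[≠] x, y ∉ S) : S.Countable ∧ IsClosed S := by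
  have key : IsClosed S ∧ DiscreteTopology S := by
    rw [← isDiscrete_iff_discreteTopology, isClosed_and_discrete_iff]
    intro x
    rw [disjoint_principal_right]
    exact h x
  refine ⟨?_, key.1⟩
  haveI := key.2
  haveI : TopologicalSpace.SeparableSpace S :=
    TopologicalSpace.SecondCountableTopology.to_separableSpace
  have : Countable S := TopologicalSpace.separableSpace_iff_countable.mp this
  exact Set.countable_coe_iff.mp this

end AKNSAux

end AKNSAuxSection

open Filter Topology AKNSAux

/-- gauge transformations preserve algebro-geometric AKNS potentials.
If `(p,q)` is a meromorphic algebro-geometric AKNS potential and `φ` is a meromorphic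
solution of the Riccati equation `φ' = p - q φ² + 2iE₀φ`, then
`(p̃, q̃) = (φ, -q' - 2iE₀q + q²φ)` is a meromorphic algebro-geometric AKNS potential. -/
theorem gauge_transformation_preserves_algebroGeometric
    (p q : ℂ → ℂ) (h : IsAGAKNS p q) (E₀ : ℂ) (φ : ℂ → ℂ)
    (hφm : MeromorphicOn φ Set.univ)
    (hric : ∃ S : Set ℂ, S.Countable ∧ IsClosed S ∧ ∀ x ∉ S,
      DifferentiableAt ℂ φ x ∧
      deriv φ x = p x - q x * φ x ^ 2 + 2 * I * E₀ * φ x) :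
    IsAGAKNS φ (fun x => -deriv q x - 2 * I * E₀ * q x + q x ^ 2 * φ x) := by
  classical
  obtain ⟨n, f, g, h', S, hpm, hqm, hfm, hgm, hhm, hScnt, hScl, hreg, hf0, hg0, hh0, hzc⟩ := h
  obtain ⟨Sr, hSrcnt, hSrcl, hricc⟩ := hric
  set NA : Set ℂ := {x | ¬ AnalyticAt ℂ φ x} with hNA
  set St : Set ℂ := (S ∪ Sr) ∪ NA with hSt
  set qt : ℂ → ℂ := fun y => -deriv q y - 2 * I * E₀ * q y + q y ^ 2 * φ y with hqt
  set Af : ℂ → ℂ := fun y => 2 * I * E₀ - q y * φ y with hAf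
  set fP : ℕ → ℂ → ℂ := fun k => if k ≤ n then f k else fun _ => 0 with hfP
  set gP : ℕ → ℂ → ℂ := fun k => if k ≤ n + 1 then g k else fun _ => 0 with hgP
  set lf : ℕ → ℂ → ℂ := liftSeq f with hlf
  set lh : ℕ → ℂ → ℂ := liftSeq h' with hlh
  set lfP : ℕ → ℂ → ℂ := liftSeq fP with hlfP
  set lg : ℕ → ℂ → ℂ := liftSeq g with hlg
  set llf : ℕ → ℂ → ℂ := liftSeq lf with hllf
  set llh : ℕ → ℂ → ℂ := liftSeq lh with hllh
  set us : ℕ → ℂ → ℂ := fun k y => 1 * fP k y + (I * q y) * g k y with hus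
  set vs : ℕ → ℂ → ℂ := fun k => if k = n + 1 then (fun _ => 0) else us (k + 1) with hvs
  set ftraw : ℕ → ℂ → ℂ := fun k y =>
    2 * I * vs k y + (-2 * Af y) * fP k y + (-I/2) * Af y ^ 2 * lf k y
      + (-I * Af y * q y) * g k y + (-I/2) * q y ^ 2 * lh k y with hftraw
  set gtr : ℕ → ℂ → ℂ := fun k y =>
    (-φ y) * lfP k y + (-I/2) * Af y * φ y * llf k y + 1 * gP k y
      + (-I/2) * (q y * φ y - Af y) * lg k y + (I/2) * q y * llh k y with hgtr
  set htr : ℕ → ℂ → ℂ := fun k y =>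
    (-I/2) * φ y ^ 2 * lf k y + I * φ y * g k y + (-I/2) * lh k y with hhtr
  set ft : ℕ → ℂ → ℂ := fun k => if k = 0 then (fun y => -I * qt y) else ftraw k with hft
  -- piece evaluations
  have peF0 : ∀ E x : ℂ, akPoly n fP E x = akPoly n f E x := by
    intro E x
    refine akPoly_congr _ _ _ _ _ fun k hk => ?_
    simp [hfP, hk]
  have pe1 : ∀ E x : ℂ, akPoly (n + 1) fP E x = E * akPoly n f E x := by
    intro E x
    rw [akPoly_succ', peF0]
    have h1 : fP (n + 1) x = 0 := by simp [hfP]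
    rw [h1, add_zero]
  have pe2 : ∀ E x : ℂ, akPoly (n + 1) lf E x = akPoly n f E x := by
    intro E x; rw [hlf]; exact akPoly_lift n f E x
  have pe3 : ∀ E x : ℂ, akPoly (n + 1) lh E x = akPoly n h' E x := by
    intro E x; rw [hlh]; exact akPoly_lift n h' E x
  have peus : ∀ E x : ℂ, akPoly (n + 1) us E x
      = E * akPoly n f E x + I * q x * akPoly (n + 1) g E x := by
    intro E x
    have hc : akPoly (n + 1) us E x
        = 1 * akPoly (n + 1) fP E x + (I * q x) * akPoly (n + 1) g E x :=
      akPoly_comb2 (n + 1) (fun _ => 1) (fun y => I * q y) fP g E x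
    rw [hc, pe1]; ring
  have pevs : ∀ E x : ℂ, akPoly (n + 1) vs E x
      = E * (E * akPoly n f E x + I * q x * akPoly (n + 1) g E x) := by
    intro E x
    have h0 : us 0 x = 0 := by
      have : fP 0 = f 0 := by simp [hfP]
      simp only [hus, this, hf0, hg0]
      ring
    rw [hvs, akPoly_eshift (n + 1) us E x h0, peus]
  have pe5 : ∀ E x : ℂ, akPoly (n + 1 + 1) lfP E x = E * akPoly n f E x := by
    intro E x
    rw [hlfP, akPoly_lift (n + 1) fP E x, pe1]
  have pe6 : ∀ E x : ℂ, akPoly (n + 1 + 1) llf E x = akPoly n f E x := by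
    intro E x
    rw [hllf, akPoly_lift (n + 1) lf E x, pe2]
  have peG0 : ∀ E x : ℂ, akPoly (n + 1) gP E x = akPoly (n + 1) g E x := by
    intro E x
    refine akPoly_congr _ _ _ _ _ fun k hk => ?_
    simp [hgP, hk]
  have pe7 : ∀ E x : ℂ, akPoly (n + 1 + 1) gP E x = E * akPoly (n + 1) g E x := by
    intro E x
    rw [akPoly_succ', peG0]
    have h1 : gP (n + 1 + 1) x = 0 := by simp [hgP]
    rw [h1, add_zero]
  have pe8 : ∀ E x : ℂ, akPoly (n + 1 + 1) lg E x = akPoly (n + 1) g E x := by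
    intro E x; rw [hlg]; exact akPoly_lift (n + 1) g E x
  have pe9 : ∀ E x : ℂ, akPoly (n + 1 + 1) llh E x = akPoly n h' E x := by
    intro E x
    rw [hllh, akPoly_lift (n + 1) lh E x, pe3]
  -- representations
  have repH : ∀ E x : ℂ, akPoly (n + 1) htr E x
      = (-I/2) * (φ x ^ 2 * akPoly n f E x - 2 * φ x * akPoly (n + 1) g E x
        + akPoly n h' E x) := by
    intro E x
    have hc : akPoly (n + 1) htr E x
        = ((-I/2) * φ x ^ 2) * akPoly (n + 1) lf E x + (I * φ x) * akPoly (n + 1) g E x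
          + (-I/2) * akPoly (n + 1) lh E x :=
      akPoly_comb3 (n + 1) (fun y => (-I/2) * φ y ^ 2) (fun y => I * φ y) (fun _ => -I/2)
        lf g lh E x
    rw [hc, pe2, pe3]; ring
  have repG : ∀ E x : ℂ, akPoly (n + 1 + 1) gtr E x
      = (-I/2) * ((-2 * I * E + Af x) * φ x * akPoly n f E x
        - (-2 * I * E + Af x) * akPoly (n + 1) g E x
        + q x * φ x * akPoly (n + 1) g E x - q x * akPoly n h' E x) := by
    intro E x
    have hc : akPoly (n + 1 + 1) gtr E x
        = (-φ x) * akPoly (n + 1 + 1) lfP E x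
          + ((-I/2) * Af x * φ x) * akPoly (n + 1 + 1) llf E x
          + 1 * akPoly (n + 1 + 1) gP E x
          + ((-I/2) * (q x * φ x - Af x)) * akPoly (n + 1 + 1) lg E x
          + ((I/2) * q x) * akPoly (n + 1 + 1) llh E x :=
      akPoly_comb5 (n + 1 + 1) (fun y => -φ y) (fun y => (-I/2) * Af y * φ y)
        (fun _ => 1) (fun y => (-I/2) * (q y * φ y - Af y)) (fun y => (I/2) * q y)
        lfP llf gP lg llh E x
    rw [hc, pe5, pe6, pe7, pe8, pe9]
    linear_combination (E * akPoly (n + 1) g E x - φ x * E * akPoly n f E x) * Complex.I_sq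
  have repFraw : ∀ E x : ℂ, akPoly (n + 1) ftraw E x
      = (-I/2) * ((-2 * I * E + Af x) ^ 2 * akPoly n f E x
        + 2 * (-2 * I * E + Af x) * q x * akPoly (n + 1) g E x
        + q x ^ 2 * akPoly n h' E x) := by
    intro E x
    have hc : akPoly (n + 1) ftraw E x
        = (2 * I) * akPoly (n + 1) vs E x + (-2 * Af x) * akPoly (n + 1) fP E x
          + ((-I/2) * Af x ^ 2) * akPoly (n + 1) lf E x
          + (-I * Af x * q x) * akPoly (n + 1) g E x
          + ((-I/2) * q x ^ 2) * akPoly (n + 1) lh E x :=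
      akPoly_comb5 (n + 1) (fun _ => 2 * I) (fun y => -2 * Af y)
        (fun y => (-I/2) * Af y ^ 2) (fun y => -I * Af y * q y) (fun y => (-I/2) * q y ^ 2)
        vs fP lf g lh E x
    rw [hc, pevs, pe1, pe2, pe3]
    linear_combination ((2 * I * E ^ 2 - 2 * Af x * E) * akPoly n f E x) * Complex.I_sq
  -- coefficient identity off S
  have hover : ∀ x ∉ S, ftraw 0 x = -I * qt x := by
    intro x hx
    obtain ⟨hpa, hqa, hca⟩ := hreg x hx
    have hqd : DifferentiableAt ℂ q x := hqa.differentiableAt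
    have hdiff : ∀ k, DifferentiableAt ℂ (f k) x := fun k => (hca k).1.differentiableAt
    have claim : ∀ E : ℂ, ∑ ℓ ∈ Finset.range (n + 2),
        ((if ℓ ≤ n then deriv (f (n - ℓ)) x else 0) + 2 * I * fP (n + 1 - ℓ) x
          - 2 * q x * g (n + 1 - ℓ) x) * E ^ ℓ = 0 := by
      intro E
      have e1 : ∑ ℓ ∈ Finset.range (n + 2),
          (if ℓ ≤ n then deriv (f (n - ℓ)) x else 0) * E ^ ℓ
          = deriv (fun y => akPoly n f E y) x := by
        rw [Finset.sum_range_succ, if_neg (by omega), zero_mul, add_zero,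
          (akPoly_hasDerivAt n f E x hdiff).deriv]
        refine Finset.sum_congr rfl fun i hi => ?_
        rw [if_pos (Nat.lt_succ_iff.mp (Finset.mem_range.mp hi))]
      have e2 : ∑ ℓ ∈ Finset.range (n + 2), (2 * I * fP (n + 1 - ℓ) x) * E ^ ℓ
          = 2 * I * (E * akPoly n f E x) := by
        rw [← pe1 E x, akPoly, Finset.mul_sum]
        exact Finset.sum_congr rfl fun i _ => by ring
      have e3 : ∑ ℓ ∈ Finset.range (n + 2), (2 * q x * g (n + 1 - ℓ) x) * E ^ ℓ
          = 2 * q x * akPoly (n + 1) g E x := by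
        rw [akPoly, Finset.mul_sum]
        exact Finset.sum_congr rfl fun i _ => by ring
      have esplit : ∑ ℓ ∈ Finset.range (n + 2),
          ((if ℓ ≤ n then deriv (f (n - ℓ)) x else 0) + 2 * I * fP (n + 1 - ℓ) x
            - 2 * q x * g (n + 1 - ℓ) x) * E ^ ℓ
          = (∑ ℓ ∈ Finset.range (n + 2),
              (if ℓ ≤ n then deriv (f (n - ℓ)) x else 0) * E ^ ℓ)
            + ((∑ ℓ ∈ Finset.range (n + 2), (2 * I * fP (n + 1 - ℓ) x) * E ^ ℓ)
            - (∑ ℓ ∈ Finset.range (n + 2), (2 * q x * g (n + 1 - ℓ) x) * E ^ ℓ)) := by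
        rw [← Finset.sum_sub_distrib, ← Finset.sum_add_distrib]
        exact Finset.sum_congr rfl fun i _ => by ring
      rw [esplit, e1, e2, e3, (hzc E x hx).1]
      ring
    have hdn := coeff_eq_zero (n + 2) _ claim n (Finset.mem_range.mpr (by omega))
    simp only [if_pos (le_refl n), Nat.sub_self] at hdn
    have hn1 : n + 1 - n = 1 := by omega
    rw [hn1] at hdn
    have hder0 : deriv (f 0) x = -I * deriv q x := by
      rw [hf0]
      exact deriv_const_mul (-I) hqd
    rw [hder0] at hdn
    have hvs0 : vs 0 x = 1 * fP 1 x + I * q x * g 1 x := by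
      have hne : (0:ℕ) ≠ n + 1 := by omega
      simp only [hvs, hus, if_neg hne]
    have hfP0 : fP 0 x = -I * q x := by
      have h1 : fP 0 = f 0 := by simp [hfP]
      rw [h1, hf0]
    have hg0x : g 0 x = (1:ℂ) := by rw [hg0]
    have hlf0 : lf 0 x = 0 := by rw [hlf]; rfl
    have hlh0 : lh 0 x = 0 := by rw [hlh]; rfl
    show 2 * I * vs 0 x + (-2 * Af x) * fP 0 x + (-I/2) * Af x ^ 2 * lf 0 x
      + (-I * Af x * q x) * g 0 x + (-I/2) * q x ^ 2 * lh 0 x = -I * qt x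
    rw [hvs0, hfP0, hlf0, hlh0, hg0x]
    simp only [hAf, hqt]
    linear_combination hdn + (2 * q x * g 1 x) * Complex.I_sq
  have repF : ∀ (E : ℂ), ∀ x ∉ S, akPoly (n + 1) ft E x
      = (-I/2) * ((-2 * I * E + Af x) ^ 2 * akPoly n f E x
        + 2 * (-2 * I * E + Af x) * q x * akPoly (n + 1) g E x
        + q x ^ 2 * akPoly n h' E x) := by
    intro E x hx
    have hsp := akPoly_top_split (n + 1) ft ftraw E x
      (fun k hk => by simp only [hft]; rw [if_neg hk])
    have hov : ft 0 x = ftraw 0 x := by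
      have h1 : ft 0 = fun y => -I * qt y := by simp only [hft]; rw [if_true]
      rw [h1, hover x hx]
    rw [hsp, hov, sub_self, zero_mul, add_zero, repFraw]
  -- countability / closedness of the new singular set
  have hNAcc : NA.Countable ∧ IsClosed NA := by
    apply countable_closed_of_isolated
    intro x
    filter_upwards [(hφm x trivial).eventually_analyticAt] with y hy
    simp only [hNA, Set.mem_setOf_eq, not_not]
    exact hy
  have hStcl : IsClosed St := by
    rw [hSt]; exact (hScl.union hSrcl).union hNAcc.2
  have hStcnt : St.Countable := by
    rw [hSt]; exact (hScnt.union hSrcnt).union hNAcc.1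
  -- meromorphy helpers
  have hqtm : ∀ x : ℂ, MeromorphicAt qt x := by
    intro x
    have h1 : MeromorphicAt (deriv q) x := AKNSAux.MeromorphicAt.deriv'' (hqm x trivial)
    have h2 := hqm x trivial
    have h3 := hφm x trivial
    exact (h1.neg.sub ((MeromorphicAt.const (2*I*E₀) x).mul h2)).add ((h2.pow 2).mul h3)
  have hfPm : ∀ k, ∀ x : ℂ, MeromorphicAt (fP k) x := by
    intro k x
    by_cases hk : k ≤ n
    · simp only [hfP, if_pos hk]; exact hfm k x trivial
    · simp only [hfP, if_neg hk]; exact MeromorphicAt.const 0 x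
  have hgPm : ∀ k, ∀ x : ℂ, MeromorphicAt (gP k) x := by
    intro k x
    by_cases hk : k ≤ n + 1
    · simp only [hgP, if_pos hk]; exact hgm k x trivial
    · simp only [hgP, if_neg hk]; exact MeromorphicAt.const 0 x
  have hlfm : ∀ k, ∀ x : ℂ, MeromorphicAt (lf k) x := by
    intro k x
    cases k with
    | zero => simp only [hlf, liftSeq]; exact MeromorphicAt.const 0 x
    | succ j => simp only [hlf, liftSeq]; exact hfm j x trivial
  have hlhm : ∀ k, ∀ x : ℂ, MeromorphicAt (lh k) x := by
    intro k x
    cases k with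
    | zero => simp only [hlh, liftSeq]; exact MeromorphicAt.const 0 x
    | succ j => simp only [hlh, liftSeq]; exact hhm j x trivial
  have hlgm : ∀ k, ∀ x : ℂ, MeromorphicAt (lg k) x := by
    intro k x
    cases k with
    | zero => simp only [hlg, liftSeq]; exact MeromorphicAt.const 0 x
    | succ j => simp only [hlg, liftSeq]; exact hgm j x trivial
  have hlfPm : ∀ k, ∀ x : ℂ, MeromorphicAt (lfP k) x := by
    intro k x
    cases k with
    | zero => simp only [hlfP, liftSeq]; exact MeromorphicAt.const 0 x
    | succ j => simp only [hlfP, liftSeq]; exact hfPm j x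
  have hllfm : ∀ k, ∀ x : ℂ, MeromorphicAt (llf k) x := by
    intro k x
    cases k with
    | zero => simp only [hllf, liftSeq]; exact MeromorphicAt.const 0 x
    | succ j => simp only [hllf, liftSeq]; exact hlfm j x
  have hllhm : ∀ k, ∀ x : ℂ, MeromorphicAt (llh k) x := by
    intro k x
    cases k with
    | zero => simp only [hllh, liftSeq]; exact MeromorphicAt.const 0 x
    | succ j => simp only [hllh, liftSeq]; exact hlhm j x
  have husm : ∀ k, ∀ x : ℂ, MeromorphicAt (us k) x := by
    intro k x
    simp only [hus]
    exact ((MeromorphicAt.const 1 x).mul (hfPm k x)).add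
      (((MeromorphicAt.const I x).mul (hqm x trivial)).mul (hgm k x trivial))
  have hvsm : ∀ k, ∀ x : ℂ, MeromorphicAt (vs k) x := by
    intro k x
    by_cases hk : k = n + 1
    · simp only [hvs, if_pos hk]; exact MeromorphicAt.const 0 x
    · simp only [hvs, if_neg hk]; exact husm (k+1) x
  have hAfm : ∀ x : ℂ, MeromorphicAt Af x := fun x =>
    (MeromorphicAt.const (2*I*E₀) x).sub ((hqm x trivial).mul (hφm x trivial))
  have hftrawm : ∀ k, ∀ x : ℂ, MeromorphicAt (ftraw k) x := by
    intro k x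
    simp only [hftraw]
    exact (((((MeromorphicAt.const (2*I) x).mul (hvsm k x)).add
      (((MeromorphicAt.const (-2) x).mul (hAfm x)).mul (hfPm k x))).add
      (((MeromorphicAt.const (-I/2) x).mul ((hAfm x).pow 2)).mul (hlfm k x))).add
      ((((MeromorphicAt.const (-I) x).mul (hAfm x)).mul (hqm x trivial)).mul
        (hgm k x trivial))).add
      (((MeromorphicAt.const (-I/2) x).mul ((hqm x trivial).pow 2)).mul (hlhm k x))
  have hftm : ∀ k, ∀ x : ℂ, MeromorphicAt (ft k) x := by
    intro k x
    by_cases hk : k = 0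
    · simp only [hft, if_pos hk]
      exact (MeromorphicAt.const (-I) x).mul (hqtm x)
    · simp only [hft, if_neg hk]; exact hftrawm k x
  have hgtrm : ∀ k, ∀ x : ℂ, MeromorphicAt (gtr k) x := by
    intro k x
    simp only [hgtr]
    exact (((((hφm x trivial).neg.mul (hlfPm k x)).add
      ((((MeromorphicAt.const (-I/2) x).mul (hAfm x)).mul (hφm x trivial)).mul
        (hllfm k x))).add ((MeromorphicAt.const 1 x).mul (hgPm k x))).add
      (((MeromorphicAt.const (-I/2) x).mul
        (((hqm x trivial).mul (hφm x trivial)).sub (hAfm x))).mul (hlgm k x))).add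
      (((MeromorphicAt.const (I/2) x).mul (hqm x trivial)).mul (hllhm k x))
  have hhtrm : ∀ k, ∀ x : ℂ, MeromorphicAt (htr k) x := by
    intro k x
    simp only [hhtr]
    exact ((((MeromorphicAt.const (-I/2) x).mul ((hφm x trivial).pow 2)).mul
      (hlfm k x)).add (((MeromorphicAt.const I x).mul (hφm x trivial)).mul
        (hgm k x trivial))).add ((MeromorphicAt.const (-I/2) x).mul (hlhm k x))
  refine ⟨n + 1, ft, gtr, htr, St, fun x _ => hφm x trivial, fun x _ => hqtm x,
    fun k x _ => hftm k x, fun k x _ => hgtrm k x, fun k x _ => hhtrm k x,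
    hStcnt, hStcl, ?_, ?_, ?_, ?_, ?_⟩
  · -- regularity off St
    intro x hx
    have hx0 := hx
    simp only [hSt, Set.mem_union, not_or] at hx
    obtain ⟨⟨hxS, hxSr⟩, hxNA⟩ := hx
    obtain ⟨hpa, hqa, hca⟩ := hreg x hxS
    have hφa : AnalyticAt ℂ φ x := by
      by_contra hc
      exact hxNA (by simp only [hNA, Set.mem_setOf_eq]; exact hc)
    have hqta : AnalyticAt ℂ qt x := by
      simp only [hqt]
      exact (((analyticAt_deriv hqa).neg).sub
        ((analyticAt_const.mul hqa) : AnalyticAt ℂ (fun y => 2*I*E₀ * q y) x)).add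
        ((hqa.pow 2).mul hφa)
    have hfPa : ∀ k, AnalyticAt ℂ (fP k) x := by
      intro k
      by_cases hk : k ≤ n
      · simp only [hfP, if_pos hk]; exact (hca k).1
      · simp only [hfP, if_neg hk]; exact analyticAt_const
    have hgPa : ∀ k, AnalyticAt ℂ (gP k) x := by
      intro k
      by_cases hk : k ≤ n + 1
      · simp only [hgP, if_pos hk]; exact (hca k).2.1
      · simp only [hgP, if_neg hk]; exact analyticAt_const
    have hlfa : ∀ k, AnalyticAt ℂ (lf k) x := by
      intro k
      cases k with
      | zero => simp only [hlf, liftSeq]; exact analyticAt_const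
      | succ j => simp only [hlf, liftSeq]; exact (hca j).1
    have hlha : ∀ k, AnalyticAt ℂ (lh k) x := by
      intro k
      cases k with
      | zero => simp only [hlh, liftSeq]; exact analyticAt_const
      | succ j => simp only [hlh, liftSeq]; exact (hca j).2.2
    have hlga : ∀ k, AnalyticAt ℂ (lg k) x := by
      intro k
      cases k with
      | zero => simp only [hlg, liftSeq]; exact analyticAt_const
      | succ j => simp only [hlg, liftSeq]; exact (hca j).2.1
    have hlfPa : ∀ k, AnalyticAt ℂ (lfP k) x := by
      intro k
      cases k with
      | zero => simp only [hlfP, liftSeq]; exact analyticAt_const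
      | succ j => simp only [hlfP, liftSeq]; exact hfPa j
    have hllfa : ∀ k, AnalyticAt ℂ (llf k) x := by
      intro k
      cases k with
      | zero => simp only [hllf, liftSeq]; exact analyticAt_const
      | succ j => simp only [hllf, liftSeq]; exact hlfa j
    have hllha : ∀ k, AnalyticAt ℂ (llh k) x := by
      intro k
      cases k with
      | zero => simp only [hllh, liftSeq]; exact analyticAt_const
      | succ j => simp only [hllh, liftSeq]; exact hlha j
    have husa : ∀ k, AnalyticAt ℂ (us k) x := by
      intro k
      simp only [hus]
      exact (analyticAt_const.mul (hfPa k)).add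
        ((analyticAt_const.mul hqa).mul ((hca k).2.1))
    have hvsa : ∀ k, AnalyticAt ℂ (vs k) x := by
      intro k
      by_cases hk : k = n + 1
      · simp only [hvs, if_pos hk]; exact analyticAt_const
      · simp only [hvs, if_neg hk]; exact husa (k+1)
    have hAfa : AnalyticAt ℂ Af x := analyticAt_const.sub (hqa.mul hφa)
    have hftrawa : ∀ k, AnalyticAt ℂ (ftraw k) x := by
      intro k
      simp only [hftraw]
      exact ((((analyticAt_const.mul (hvsa k)).add
        ((analyticAt_const.mul hAfa).mul (hfPa k))).add
        ((analyticAt_const.mul (hAfa.pow 2)).mul (hlfa k))).add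
        (((analyticAt_const.mul hAfa).mul hqa).mul ((hca k).2.1))).add
        ((analyticAt_const.mul (hqa.pow 2)).mul (hlha k))
    refine ⟨hφa, hqta, fun k => ⟨?_, ?_, ?_⟩⟩
    · by_cases hk : k = 0
      · simp only [hft, if_pos hk]; exact analyticAt_const.mul hqta
      · simp only [hft, if_neg hk]; exact hftrawa k
    · simp only [hgtr]
      exact ((((hφa.neg.mul (hlfPa k)).add
        (((analyticAt_const.mul hAfa).mul hφa).mul (hllfa k))).add
        (analyticAt_const.mul (hgPa k))).add
        ((analyticAt_const.mul ((hqa.mul hφa).sub hAfa)).mul (hlga k))).add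
        ((analyticAt_const.mul hqa).mul (hllha k))
    · simp only [hhtr]
      exact (((analyticAt_const.mul (hφa.pow 2)).mul (hlfa k)).add
        ((analyticAt_const.mul hφa).mul ((hca k).2.1))).add
        (analyticAt_const.mul (hlha k))
  · -- ft 0
    simp only [hft]; rw [if_true]
  · -- gtr 0
    funext y
    have h01 : (0:ℕ) ≤ n + 1 := by omega
    simp only [hgtr, hlfP, hllf, hlg, hllh, hgP, liftSeq, if_pos h01, hg0]
    ring
  · -- htr 0
    funext y
    simp only [hhtr, hlf, hlh, liftSeq, hg0]
    ring
  · -- zero curvature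
    intro E x hx
    have hx0 := hx
    simp only [hSt, Set.mem_union, not_or] at hx
    obtain ⟨⟨hxS, hxSr⟩, hxNA⟩ := hx
    obtain ⟨hpa, hqa, hca⟩ := hreg x hxS
    have hqd : HasDerivAt q (deriv q x) x := hqa.differentiableAt.hasDerivAt
    have hφd : HasDerivAt φ (p x - q x * φ x ^ 2 + 2 * I * E₀ * φ x) x := by
      have h1 := (hricc x hxSr).1.hasDerivAt
      rwa [(hricc x hxSr).2] at h1
    have hFd : HasDerivAt (fun y => akPoly n f E y)
        (-2 * I * E * akPoly n f E x + 2 * q x * akPoly (n + 1) g E x) x := by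
      have h1 := akPoly_hasDerivAt n f E x (fun k => (hca k).1.differentiableAt)
      have h2 : (∑ ℓ ∈ Finset.range (n+1), deriv (f (n - ℓ)) x * E ^ ℓ)
          = -2 * I * E * akPoly n f E x + 2 * q x * akPoly (n + 1) g E x := by
        rw [← h1.deriv]; exact (hzc E x hxS).1
      rwa [h2] at h1
    have hGd : HasDerivAt (fun y => akPoly (n + 1) g E y)
        (p x * akPoly n f E x + q x * akPoly n h' E x) x := by
      have h1 := akPoly_hasDerivAt (n + 1) g E x (fun k => (hca k).2.1.differentiableAt)
      have h2 : (∑ ℓ ∈ Finset.range (n+1+1), deriv (g (n + 1 - ℓ)) x * E ^ ℓ)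
          = p x * akPoly n f E x + q x * akPoly n h' E x := by
        rw [← h1.deriv]; exact (hzc E x hxS).2.1
      rwa [h2] at h1
    have hHd : HasDerivAt (fun y => akPoly n h' E y)
        (2 * I * E * akPoly n h' E x + 2 * p x * akPoly (n + 1) g E x) x := by
      have h1 := akPoly_hasDerivAt n h' E x (fun k => (hca k).2.2.differentiableAt)
      have h2 : (∑ ℓ ∈ Finset.range (n+1), deriv (h' (n - ℓ)) x * E ^ ℓ)
          = 2 * I * E * akPoly n h' E x + 2 * p x * akPoly (n + 1) g E x := by
        rw [← h1.deriv]; exact (hzc E x hxS).2.2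
      rwa [h2] at h1
    have haad : HasDerivAt (fun y => -2*I*E + Af y)
        (-(deriv q x * φ x + q x * (p x - q x * φ x ^ 2 + 2 * I * E₀ * φ x))) x := by
      have h1 : HasDerivAt (fun y => 2 * I * E₀ - q y * φ y)
          (0 - (deriv q x * φ x + q x * (p x - q x * φ x ^ 2 + 2 * I * E₀ * φ x))) x :=
        (hasDerivAt_const x (2*I*E₀)).sub (hqd.mul hφd)
      have h2 := (hasDerivAt_const x (-2*I*E)).add h1
      refine h2.congr_deriv ?_
      · ring
    refine ⟨?_, ?_, ?_⟩
    · -- first equation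
      have hfun : (fun y => akPoly (n + 1) ft E y) =ᶠ[𝓝 x] (fun y =>
          (-I/2) * ((-2*I*E + Af y)^2 * akPoly n f E y
            + 2*(-2*I*E + Af y)*q y*akPoly (n+1) g E y
            + q y^2*akPoly n h' E y)) := by
        filter_upwards [hStcl.isOpen_compl.mem_nhds hx0] with y hy
        have hyS : y ∉ S := fun hys => hy (Set.mem_union_left _ (Set.mem_union_left _ hys))
        exact repF E y hyS
      have hPsiF : HasDerivAt (fun y =>
          (-I/2) * ((-2*I*E + Af y)^2 * akPoly n f E y
            + 2*(-2*I*E + Af y)*q y*akPoly (n+1) g E y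
            + q y^2*akPoly n h' E y))
          ((-I/2) * ((2*(-2*I*E + Af x)
              * (-(deriv q x * φ x + q x * (p x - q x * φ x ^ 2 + 2 * I * E₀ * φ x))))
              * akPoly n f E x
            + (-2*I*E + Af x)^2
              * (-2 * I * E * akPoly n f E x + 2 * q x * akPoly (n + 1) g E x)
            + (2*(-(deriv q x * φ x + q x * (p x - q x * φ x ^ 2 + 2 * I * E₀ * φ x)))
                * q x + 2*(-2*I*E + Af x) * deriv q x) * akPoly (n+1) g E x
            + 2*(-2*I*E + Af x)*q x
              * (p x * akPoly n f E x + q x * akPoly n h' E x)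
            + 2*q x*deriv q x*akPoly n h' E x
            + q x^2*(2 * I * E * akPoly n h' E x + 2 * p x * akPoly (n + 1) g E x))) x := by
        have h0 := ((((haad.pow 2).mul hFd).add
          (((haad.const_mul 2).mul hqd).mul hGd)).add
          ((hqd.pow 2).mul hHd)).const_mul (-I/2)
        refine h0.congr_deriv ?_
        simp only [Pi.pow_apply, Pi.mul_apply, Pi.add_apply, Pi.sub_apply, Pi.neg_apply]
        push_cast
        ring
      rw [hfun.deriv_eq, hPsiF.deriv, repF E x hxS, repG E x]
      simp only [hAf, hqt]
      ring
    · -- second equation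
      have hfunG : (fun y => akPoly (n + 1 + 1) gtr E y) = (fun y =>
          (-I/2) * ((-2*I*E + Af y) * φ y * akPoly n f E y
            - (-2*I*E + Af y) * akPoly (n+1) g E y
            + q y * φ y * akPoly (n+1) g E y - q y * akPoly n h' E y)) :=
        funext fun y => repG E y
      have hPsiG : HasDerivAt (fun y =>
          (-I/2) * ((-2*I*E + Af y) * φ y * akPoly n f E y
            - (-2*I*E + Af y) * akPoly (n+1) g E y
            + q y * φ y * akPoly (n+1) g E y - q y * akPoly n h' E y))
          ((-I/2) * (((-(deriv q x * φ x + q x * (p x - q x * φ x ^ 2 + 2 * I * E₀ * φ x)))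
                * φ x + (-2*I*E + Af x) * (p x - q x * φ x ^ 2 + 2 * I * E₀ * φ x))
                * akPoly n f E x
            + (-2*I*E + Af x) * φ x
              * (-2 * I * E * akPoly n f E x + 2 * q x * akPoly (n + 1) g E x)
            - ((-(deriv q x * φ x + q x * (p x - q x * φ x ^ 2 + 2 * I * E₀ * φ x)))
                * akPoly (n+1) g E x
              + (-2*I*E + Af x) * (p x * akPoly n f E x + q x * akPoly n h' E x))
            + (deriv q x * φ x + q x * (p x - q x * φ x ^ 2 + 2 * I * E₀ * φ x))
              * akPoly (n+1) g E x
            + q x * φ x * (p x * akPoly n f E x + q x * akPoly n h' E x)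
            - (deriv q x * akPoly n h' E x
              + q x * (2 * I * E * akPoly n h' E x + 2 * p x * akPoly (n + 1) g E x)))) x := by
        have h0 := (((((haad.mul hφd).mul hFd).sub (haad.mul hGd)).add
          ((hqd.mul hφd).mul hGd)).sub (hqd.mul hHd)).const_mul (-I/2)
        refine h0.congr_deriv ?_
        simp only [Pi.pow_apply, Pi.mul_apply, Pi.add_apply, Pi.sub_apply, Pi.neg_apply]
        ring
      rw [hfunG, hPsiG.deriv, repF E x hxS, repH E x]
      simp only [hAf, hqt]
      ring
    · -- third equation
      have hfunH : (fun y => akPoly (n + 1) htr E y) = (fun y =>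
          (-I/2) * (φ y ^ 2 * akPoly n f E y - 2 * φ y * akPoly (n+1) g E y
            + akPoly n h' E y)) :=
        funext fun y => repH E y
      have hPsiH : HasDerivAt (fun y =>
          (-I/2) * (φ y ^ 2 * akPoly n f E y - 2 * φ y * akPoly (n+1) g E y
            + akPoly n h' E y))
          ((-I/2) * (2 * φ x * (p x - q x * φ x ^ 2 + 2 * I * E₀ * φ x) * akPoly n f E x
            + φ x ^ 2 * (-2 * I * E * akPoly n f E x + 2 * q x * akPoly (n + 1) g E x)
            - (2 * (p x - q x * φ x ^ 2 + 2 * I * E₀ * φ x) * akPoly (n+1) g E x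
              + 2 * φ x * (p x * akPoly n f E x + q x * akPoly n h' E x))
            + (2 * I * E * akPoly n h' E x + 2 * p x * akPoly (n + 1) g E x))) x := by
        have h0 := ((((hφd.pow 2).mul hFd).sub
          ((hφd.const_mul 2).mul hGd)).add hHd).const_mul (-I/2)
        refine h0.congr_deriv ?_
        simp only [Pi.pow_apply, Pi.mul_apply, Pi.add_apply, Pi.sub_apply, Pi.neg_apply]
        push_cast
        ring
      rw [hfunH, hPsiH.deriv, repG E x, repH E x]
      simp only [hAf, hqt]
      ring
end
end

section
/- Let p, q : ℝ → ℂ be twice continuously differentiable and periodic with period Ω > 0. Then there exists a constant C > 0 such that every E ∈ ℂ for which the AKNS system with potentials (p,q) and spectral parameter E possesses a nonzero solution Ψ : ℝ → ℂ² satisfying Ψ(x + 2Ω) = Ψ(x) for all x ∈ ℝ (i.e., every periodic or semi-periodic eigenvalue) lies in the horizontal strip {E ∈ ℂ : |Im(E)| ≤ C}. -/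
open Complex

noncomputable section

/-- `akPolyR n f E x = ∑_{ℓ=0}^{n} f_{n-ℓ}(x) E^ℓ` for coefficient functions on `ℝ`. -/
def akPolyR (n : ℕ) (f : ℕ → ℝ → ℂ) (E : ℂ) (x : ℝ) : ℂ :=
  ∑ ℓ ∈ Finset.range (n + 1), f (n - ℓ) x * E ^ ℓ

/-- `(ψ₁, ψ₂)` is a solution of the AKNS system `JΨ' + QΨ = EΨ` on `ℝ`:
`i ψ₁' - i q ψ₂ = E ψ₁` and `-i ψ₂' + i p ψ₁ = E ψ₂`. -/
def SolvesAKNSR (p q : ℝ → ℂ) (E : ℂ) (ψ₁ ψ₂ : ℝ → ℂ) : Prop :=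
  ∀ x : ℝ,
    DifferentiableAt ℝ ψ₁ x ∧ DifferentiableAt ℝ ψ₂ x ∧
    I * deriv ψ₁ x - I * q x * ψ₂ x = E * ψ₁ x ∧
    -I * deriv ψ₂ x + I * p x * ψ₁ x = E * ψ₂ x

/-- `Φ E · x₀` is the fundamental matrix of the AKNS system with potentials `(p,q)` and
spectral parameter `E`, normalized by `Φ E x₀ x₀ = 1`. -/
def IsFundamentalMatrix (p q : ℝ → ℂ) (Φ : ℂ → ℝ → ℝ → Matrix (Fin 2) (Fin 2) ℂ) : Prop :=
  ∀ (E : ℂ) (x₀ : ℝ),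
    (∀ j, SolvesAKNSR p q E (fun x => Φ E x x₀ 0 j) (fun x => Φ E x x₀ 1 j)) ∧
    Φ E x₀ x₀ = 1

/-- For `p, q : ℝ → ℂ` twice continuously differentiable and `Ω`-periodic,
all periodic and semi-periodic eigenvalues (values `E` admitting a nonzero `2Ω`-periodic
solution of the AKNS system) lie in a horizontal strip `{|Im E| ≤ C}`. -/
theorem periodic_eigenvalues_in_strip
    (p q : ℝ → ℂ) (Ω : ℝ) (hΩ : 0 < Ω)
    (hp : ContDiff ℝ 2 p) (hq : ContDiff ℝ 2 q)
    (hpper : ∀ x, p (x + Ω) = p x) (hqper : ∀ x, q (x + Ω) = q x) :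
    ∃ C > 0, ∀ E : ℂ,
      (∃ ψ₁ ψ₂ : ℝ → ℂ,
        SolvesAKNSR p q E ψ₁ ψ₂ ∧
        (∃ x, ψ₁ x ≠ 0 ∨ ψ₂ x ≠ 0) ∧
        (∀ x, ψ₁ (x + 2 * Ω) = ψ₁ x ∧ ψ₂ (x + 2 * Ω) = ψ₂ x)) →
      |E.im| ≤ C := by
  have hpc : Continuous p := hp.continuous
  have hqc : Continuous q := hq.continuous
  have hPp : Function.Periodic p Ω := hpper
  have hPq : Function.Periodic q Ω := hqper
  -- a uniform bound on the potentials
  obtain ⟨M, hM0, hMp, hMq⟩ : ∃ M : ℝ, 0 ≤ M ∧ (∀ x, ‖p x‖ ≤ M) ∧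
      (∀ x, ‖q x‖ ≤ M) := by
    obtain ⟨Mp, hMp⟩ := (isCompact_Icc (a := (0:ℝ)) (b := Ω)).exists_bound_of_continuousOn
      hpc.continuousOn
    obtain ⟨Mq, hMq⟩ := (isCompact_Icc (a := (0:ℝ)) (b := Ω)).exists_bound_of_continuousOn
      hqc.continuousOn
    refine ⟨max (max Mp Mq) 0, le_max_right _ _, fun x => ?_, fun x => ?_⟩
    · obtain ⟨y, hy, hxy⟩ := hPp.exists_mem_Ico₀ hΩ x
      have := hMp y (Set.Ico_subset_Icc_self hy)
      rw [hxy]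
      calc ‖p y‖ = ‖p y‖ := rfl
        _ ≤ Mp := this
        _ ≤ _ := le_max_of_le_left (le_max_left _ _)
    · obtain ⟨y, hy, hxy⟩ := hPq.exists_mem_Ico₀ hΩ x
      have := hMq y (Set.Ico_subset_Icc_self hy)
      rw [hxy]
      calc ‖q y‖ = ‖q y‖ := rfl
        _ ≤ Mq := this
        _ ≤ _ := le_max_of_le_left (le_max_right _ _)
  refine ⟨M + 1, by positivity, ?_⟩
  rintro E ⟨ψ₁, ψ₂, hsol, ⟨x₀, hx₀⟩, hper⟩
  have h2Ω : (0:ℝ) < 2 * Ω := by linarith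
  -- the ODE in explicit form
  have hder1 : ∀ x, HasDerivAt ψ₁ (-(I*E) * ψ₁ x + q x * ψ₂ x) x := by
    intro x
    have hd := (hsol x).1.hasDerivAt
    have h := (hsol x).2.2.1
    have heq : deriv ψ₁ x = -(I*E) * ψ₁ x + q x * ψ₂ x := by
      linear_combination (-I) * h + (deriv ψ₁ x - q x * ψ₂ x) * Complex.I_mul_I
    rwa [heq] at hd
  have hder2 : ∀ x, HasDerivAt ψ₂ (I*E * ψ₂ x + p x * ψ₁ x) x := by
    intro x
    have hd := (hsol x).2.1.hasDerivAt
    have h := (hsol x).2.2.2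
    have heq : deriv ψ₂ x = I*E * ψ₂ x + p x * ψ₁ x := by
      linear_combination I * h + (deriv ψ₂ x - p x * ψ₁ x) * Complex.I_mul_I
    rwa [heq] at hd
  have hc1 : Continuous ψ₁ := continuous_iff_continuousAt.2 fun x => (hsol x).1.continuousAt
  have hc2 : Continuous ψ₂ := continuous_iff_continuousAt.2 fun x => (hsol x).2.1.continuousAt
  -- the key auxiliary functions
  set n : ℝ → ℝ := fun x => Complex.normSq (ψ₁ x) + Complex.normSq (ψ₂ x) with hn_def
  set g : ℝ → ℝ := fun x => Complex.normSq (ψ₁ x) - Complex.normSq (ψ₂ x) with hg_def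
  set G : ℝ → ℝ := fun x => 2*E.im * n x
      + (2*(q x * ψ₂ x * star (ψ₁ x)).re - 2*(p x * ψ₁ x * star (ψ₂ x)).re) with hG_def
  have hncont : Continuous n := ((Complex.continuous_normSq.comp hc1).add
    (Complex.continuous_normSq.comp hc2))
  have hGcont : Continuous G := by
    apply Continuous.add
    · exact continuous_const.mul hncont
    · apply Continuous.sub
      · exact continuous_const.mul (Complex.continuous_re.comp
          ((hqc.mul hc2).mul (continuous_star.comp hc1)))
      · exact continuous_const.mul (Complex.continuous_re.comp
          ((hpc.mul hc1).mul (continuous_star.comp hc2)))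
  have hG : ∀ x, HasDerivAt g (G x) x := by
    intro x
    have hF : HasDerivAt (fun y => ψ₁ y * star (ψ₁ y) - ψ₂ y * star (ψ₂ y))
        ((-(I*E) * ψ₁ x + q x * ψ₂ x) * star (ψ₁ x)
          + ψ₁ x * star (-(I*E) * ψ₁ x + q x * ψ₂ x)
          - ((I*E * ψ₂ x + p x * ψ₁ x) * star (ψ₂ x)
            + ψ₂ x * star (I*E * ψ₂ x + p x * ψ₁ x))) x :=
      ((hder1 x).mul (hder1 x).star).sub ((hder2 x).mul (hder2 x).star)
    have hre : HasDerivAt (fun y => (ψ₁ y * star (ψ₁ y) - ψ₂ y * star (ψ₂ y)).re)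
        ((-(I*E) * ψ₁ x + q x * ψ₂ x) * star (ψ₁ x)
          + ψ₁ x * star (-(I*E) * ψ₁ x + q x * ψ₂ x)
          - ((I*E * ψ₂ x + p x * ψ₁ x) * star (ψ₂ x)
            + ψ₂ x * star (I*E * ψ₂ x + p x * ψ₁ x))).re x :=
      Complex.reCLM.hasFDerivAt.comp_hasDerivAt x hF
    have hfun : (fun y => (ψ₁ y * star (ψ₁ y) - ψ₂ y * star (ψ₂ y)).re) = g := by
      funext y
      simp [hg_def, Complex.star_def, Complex.mul_conj]
    have hval : ((-(I*E) * ψ₁ x + q x * ψ₂ x) * star (ψ₁ x)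
          + ψ₁ x * star (-(I*E) * ψ₁ x + q x * ψ₂ x)
          - ((I*E * ψ₂ x + p x * ψ₁ x) * star (ψ₂ x)
            + ψ₂ x * star (I*E * ψ₂ x + p x * ψ₁ x))).re = G x := by
      simp only [hG_def, hn_def, Complex.star_def, Complex.normSq_apply, Complex.mul_re,
        Complex.mul_im, Complex.add_re, Complex.add_im, Complex.sub_re, Complex.sub_im,
        Complex.neg_re, Complex.neg_im, Complex.conj_re, Complex.conj_im, Complex.I_re,
        Complex.I_im]
      ring
    rw [hfun, hval] at hre
    exact hre
  -- integral of the derivative over a period vanishes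
  have hgper : g (2*Ω) = g 0 := by
    have h1 := (hper 0).1
    have h2 := (hper 0).2
    simp only [zero_add] at h1 h2
    simp [hg_def, h1, h2]
  have hint : ∫ x in (0:ℝ)..(2*Ω), G x = 0 := by
    rw [intervalIntegral.integral_eq_sub_of_hasDerivAt (fun x _ => hG x)
      (hGcont.intervalIntegrable _ _), hgper, sub_self]
  -- pointwise bounds on G
  have hbound : ∀ x, |G x - 2*E.im * n x| ≤ 2*M * n x := by
    intro x
    have ha : ‖ψ₁ x‖ ^ 2 = Complex.normSq (ψ₁ x) := Complex.sq_norm _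
    have hb : ‖ψ₂ x‖ ^ 2 = Complex.normSq (ψ₂ x) := Complex.sq_norm _
    have h1 : |(q x * ψ₂ x * star (ψ₁ x)).re| ≤ M * (‖ψ₁ x‖ * ‖ψ₂ x‖) := by
      calc |(q x * ψ₂ x * star (ψ₁ x)).re| ≤ ‖q x * ψ₂ x * star (ψ₁ x)‖ :=
            Complex.abs_re_le_norm _
        _ = ‖q x‖ * ‖ψ₂ x‖ * ‖ψ₁ x‖ := by
            simp [map_mul, Complex.star_def]
        _ ≤ M * (‖ψ₁ x‖ * ‖ψ₂ x‖) := by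
            nlinarith [mul_le_mul_of_nonneg_right (hMq x)
              (mul_nonneg (norm_nonneg (ψ₂ x)) (norm_nonneg (ψ₁ x)))]
    have h2 : |(p x * ψ₁ x * star (ψ₂ x)).re| ≤ M * (‖ψ₁ x‖ * ‖ψ₂ x‖) := by
      calc |(p x * ψ₁ x * star (ψ₂ x)).re| ≤ ‖p x * ψ₁ x * star (ψ₂ x)‖ :=
            Complex.abs_re_le_norm _
        _ = ‖p x‖ * ‖ψ₁ x‖ * ‖ψ₂ x‖ := by
            simp [map_mul, Complex.star_def]
        _ ≤ M * (‖ψ₁ x‖ * ‖ψ₂ x‖) := by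
            nlinarith [mul_le_mul_of_nonneg_right (hMp x)
              (mul_nonneg (norm_nonneg (ψ₁ x)) (norm_nonneg (ψ₂ x)))]
    have hab2 : 2 * (‖ψ₁ x‖ * ‖ψ₂ x‖) ≤ n x := by
      have := sq_nonneg (‖ψ₁ x‖ - ‖ψ₂ x‖)
      simp only [hn_def]
      nlinarith
    have hGx : G x - 2*E.im * n x
        = 2*(q x * ψ₂ x * star (ψ₁ x)).re - 2*(p x * ψ₁ x * star (ψ₂ x)).re := by
      simp only [hG_def]; ring
    rw [hGx]
    have := abs_sub (2*(q x * ψ₂ x * star (ψ₁ x)).re) (2*(p x * ψ₁ x * star (ψ₂ x)).re)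
    calc |2*(q x * ψ₂ x * star (ψ₁ x)).re - 2*(p x * ψ₁ x * star (ψ₂ x)).re|
        ≤ |2*(q x * ψ₂ x * star (ψ₁ x)).re| + |2*(p x * ψ₁ x * star (ψ₂ x)).re| := abs_sub _ _
      _ ≤ 2*M * n x := by
          rw [abs_mul, abs_mul, _root_.abs_two]
          nlinarith
  -- positivity of ∫ n
  have hnnonneg : ∀ x, 0 ≤ n x := fun x => add_nonneg (Complex.normSq_nonneg _)
    (Complex.normSq_nonneg _)
  have hPn : Function.Periodic n (2*Ω) := by
    intro x
    simp [hn_def, (hper x).1, (hper x).2]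
  have hnpos : 0 < n x₀ := by
    rcases hx₀ with h | h
    · exact lt_of_lt_of_le (Complex.normSq_pos.2 h) (le_add_of_nonneg_right
        (Complex.normSq_nonneg _))
    · exact lt_of_lt_of_le (Complex.normSq_pos.2 h) (le_add_of_nonneg_left
        (Complex.normSq_nonneg _))
  obtain ⟨y, hy, hyx⟩ := hPn.exists_mem_Ico₀ h2Ω x₀
  have hny : 0 < n y := by rw [← hyx]; exact hnpos
  -- move the good point into the half-open interval (0, 2Ω]
  obtain ⟨z, hz1, hz2, hnz⟩ : ∃ z, 0 < z ∧ z ≤ 2*Ω ∧ 0 < n z := by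
    rcases eq_or_lt_of_le hy.1 with h0 | h0
    · refine ⟨2*Ω, h2Ω, le_refl _, ?_⟩
      have : n (2*Ω) = n 0 := by
        have := hPn 0
        simpa using this
      rw [this]
      rwa [← h0] at hny
    · exact ⟨y, h0, hy.2.le, hny⟩
  have hInpos : 0 < ∫ x in (0:ℝ)..(2*Ω), n x := by
    have hmem : {w : ℝ | 0 < n w} ∈ nhds z := (isOpen_lt continuous_const hncont).mem_nhds hnz
    obtain ⟨ε, hε, hsub⟩ := Metric.mem_nhds_iff.1 hmem
    rw [Real.ball_eq_Ioo] at hsub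
    have hlt : max (z - ε) 0 < z := by
      rcases le_total (z - ε) 0 with h | h
      · rw [max_eq_right h]; exact hz1
      · rw [max_eq_left h]; linarith
    refine (intervalIntegral.integral_pos_iff_support_of_nonneg_ae
      (Filter.Eventually.of_forall hnnonneg) (hncont.intervalIntegrable _ _)).2 ⟨h2Ω, ?_⟩
    have hsubset : Set.Ioo (max (z - ε) 0) z ⊆ Function.support n ∩ Set.Ioc 0 (2*Ω) := by
      intro w hw
      constructor
      · apply Function.mem_support.2
        refine (hsub ?_).ne'
        constructor
        · exact lt_of_le_of_lt (le_max_left _ _) hw.1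
        · linarith [hw.2, hε]
      · exact ⟨lt_of_le_of_lt (le_max_right _ _) hw.1, le_trans hw.2.le hz2⟩
    calc (0:ENNReal) < MeasureTheory.volume (Set.Ioo (max (z - ε) 0) z) :=
          (MeasureTheory.Measure.measure_Ioo_pos _).2 hlt
      _ ≤ _ := MeasureTheory.measure_mono hsubset
  -- integrate the pointwise bounds
  have hGi : IntervalIntegrable G MeasureTheory.volume 0 (2*Ω) := hGcont.intervalIntegrable _ _
  have hupper : (0:ℝ) ≤ (2*E.im + 2*M) * ∫ x in (0:ℝ)..(2*Ω), n x := by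
    have hle : ∀ x ∈ Set.Icc (0:ℝ) (2*Ω), G x ≤ (2*E.im + 2*M) * n x := by
      intro x _
      have := hbound x
      have h1 := abs_le.1 this
      nlinarith [h1.2]
    have := intervalIntegral.integral_mono_on h2Ω.le hGi
      (((continuous_const.mul hncont)).intervalIntegrable _ _) hle
    simp only [Pi.mul_apply] at this
    rw [intervalIntegral.integral_const_mul] at this
    linarith [hint ▸ this]
  have hlower : (2*E.im - 2*M) * (∫ x in (0:ℝ)..(2*Ω), n x) ≤ 0 := by
    have hle : ∀ x ∈ Set.Icc (0:ℝ) (2*Ω), (2*E.im - 2*M) * n x ≤ G x := by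
      intro x _
      have := hbound x
      have h1 := abs_le.1 this
      nlinarith [h1.1]
    have := intervalIntegral.integral_mono_on h2Ω.le
      (((continuous_const.mul hncont)).intervalIntegrable _ _) hGi hle
    simp only [Pi.mul_apply] at this
    rw [intervalIntegral.integral_const_mul] at this
    linarith [hint ▸ this]
  have hIm1 : E.im ≤ M := by nlinarith
  have hIm2 : -M ≤ E.im := by nlinarith
  rw [abs_le]
  constructor <;> [linarith; linarith]
end
end

section
/- Let p, q : ℝ → ℂ be continuously differentiable and periodic with period Ω > 0. For E ∈ ℂ and x ∈ ℝ let g(E,x) denote the upper-right entry of the monodromy matrix Φ(E, x+Ω, x), and let Δ(E) = tr Φ(E, x+Ω, x) (which is independent of x). Then g satisfies, identically in E ∈ ℂ and x ∈ ℝ, the differential equation q(x) ( 2 g(E,x) g_{xx}(E,x) − g_x(E,x)² + 4 (E² − p(x) q(x)) g(E,x)² ) − q_x(x) ( 2 g(E,x) g_x(E,x) + 4 i E g(E,x)² ) = −q(x)³ ( Δ(E)² − 4 ). -/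
open Complex

noncomputable section

private lemma aknsHasDeriv {p q : ℝ → ℂ} {E : ℂ} {ψ₁ ψ₂ : ℝ → ℂ}
    (h : SolvesAKNSR p q E ψ₁ ψ₂) (x : ℝ) :
    HasDerivAt ψ₁ (-I * E * ψ₁ x + q x * ψ₂ x) x ∧
    HasDerivAt ψ₂ (p x * ψ₁ x + I * E * ψ₂ x) x := by
  obtain ⟨h1, h2, h3, h4⟩ := h x
  have e1 : deriv ψ₁ x = -I * E * ψ₁ x + q x * ψ₂ x := by
    linear_combination (-I) * h3 + (deriv ψ₁ x - q x * ψ₂ x) * Complex.I_sq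
  have e2 : deriv ψ₂ x = p x * ψ₁ x + I * E * ψ₂ x := by
    linear_combination I * h4 + (deriv ψ₂ x - p x * ψ₁ x) * Complex.I_sq
  exact ⟨e1 ▸ h1.hasDerivAt, e2 ▸ h2.hasDerivAt⟩

private lemma akns_unique {p q : ℝ → ℂ} {E : ℂ} {Cp Cq : ℝ}
    (hpb : ∀ t, ‖p t‖ ≤ Cp) (hqb : ∀ t, ‖q t‖ ≤ Cq)
    {f₁ f₂ g₁ g₂ : ℝ → ℂ}
    (hf : ∀ t, HasDerivAt f₁ (-I * E * f₁ t + q t * f₂ t) t ∧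
               HasDerivAt f₂ (p t * f₁ t + I * E * f₂ t) t)
    (hg : ∀ t, HasDerivAt g₁ (-I * E * g₁ t + q t * g₂ t) t ∧
               HasDerivAt g₂ (p t * g₁ t + I * E * g₂ t) t)
    {x₀ : ℝ} (h1 : f₁ x₀ = g₁ x₀) (h2 : f₂ x₀ = g₂ x₀) (x : ℝ) :
    f₁ x = g₁ x ∧ f₂ x = g₂ x := by
  set vf : ℝ → ℂ × ℂ → ℂ × ℂ :=
    fun t ζ => (-I * E * ζ.1 + q t * ζ.2, p t * ζ.1 + I * E * ζ.2) with hvf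
  set K : NNReal := (‖E‖ + max Cp 0 + max Cq 0).toNNReal with hK
  have hKcoe : (K : ℝ) = ‖E‖ + max Cp 0 + max Cq 0 :=
    Real.coe_toNNReal _ (by positivity)
  have hlip : ∀ t, LipschitzOnWith K (vf t) Set.univ := by
    intro t
    apply LipschitzWith.lipschitzOnWith
    rw [lipschitzWith_iff_dist_le_mul]
    intro a b
    rw [Prod.dist_eq, Prod.dist_eq]
    simp only [hvf, dist_eq_norm]
    have hqt : ‖q t‖ ≤ max Cq 0 := (hqb t).trans (le_max_left _ _)
    have hpt : ‖p t‖ ≤ max Cp 0 := (hpb t).trans (le_max_left _ _)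
    have key1 : ‖-I * E * a.1 + q t * a.2 - (-I * E * b.1 + q t * b.2)‖
        ≤ ‖E‖ * ‖a.1 - b.1‖ + max Cq 0 * ‖a.2 - b.2‖ := by
      have e : -I * E * a.1 + q t * a.2 - (-I * E * b.1 + q t * b.2)
          = -I * E * (a.1 - b.1) + q t * (a.2 - b.2) := by ring
      rw [e]
      refine (norm_add_le _ _).trans (add_le_add ?_ ?_)
      · rw [norm_mul, norm_mul, norm_neg, Complex.norm_I, one_mul]
      · rw [norm_mul]
        exact mul_le_mul_of_nonneg_right hqt (norm_nonneg _)
    have key2 : ‖p t * a.1 + I * E * a.2 - (p t * b.1 + I * E * b.2)‖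
        ≤ max Cp 0 * ‖a.1 - b.1‖ + ‖E‖ * ‖a.2 - b.2‖ := by
      have e : p t * a.1 + I * E * a.2 - (p t * b.1 + I * E * b.2)
          = p t * (a.1 - b.1) + I * E * (a.2 - b.2) := by ring
      rw [e]
      refine (norm_add_le _ _).trans (add_le_add ?_ ?_)
      · rw [norm_mul]
        exact mul_le_mul_of_nonneg_right hpt (norm_nonneg _)
      · rw [norm_mul, norm_mul, Complex.norm_I, one_mul]
    have hm1 : ‖a.1 - b.1‖ ≤ max ‖a.1 - b.1‖ ‖a.2 - b.2‖ := le_max_left _ _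
    have hm2 : ‖a.2 - b.2‖ ≤ max ‖a.1 - b.1‖ ‖a.2 - b.2‖ := le_max_right _ _
    have hE0 : (0:ℝ) ≤ ‖E‖ := norm_nonneg _
    have hCp0 : (0:ℝ) ≤ max Cp 0 := le_max_right _ _
    have hCq0 : (0:ℝ) ≤ max Cq 0 := le_max_right _ _
    have h10 : (0:ℝ) ≤ ‖a.1 - b.1‖ := norm_nonneg _
    have h20 : (0:ℝ) ≤ ‖a.2 - b.2‖ := norm_nonneg _
    rw [hKcoe]
    refine max_le ?_ ?_
    · refine key1.trans ?_
      nlinarith [hm1, hm2]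
    · refine key2.trans ?_
      nlinarith [hm1, hm2]
  set F : ℝ → ℂ × ℂ := fun t => (f₁ t, f₂ t) with hF
  set G : ℝ → ℂ × ℂ := fun t => (g₁ t, g₂ t) with hG
  have hF' : ∀ t, HasDerivAt F (vf t (F t)) t := fun t => ((hf t).1.prodMk (hf t).2)
  have hG' : ∀ t, HasDerivAt G (vf t (G t)) t := fun t => ((hg t).1.prodMk (hg t).2)
  have heq : F x₀ = G x₀ := by
    simp only [hF, hG, h1, h2]
  have hmem : x₀ ∈ Set.Ioo (min x₀ x - 1) (max x₀ x + 1) :=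
    ⟨by nlinarith [min_le_left x₀ x], by nlinarith [le_max_left x₀ x]⟩
  have hxmem : x ∈ Set.Icc (min x₀ x - 1) (max x₀ x + 1) :=
    ⟨by nlinarith [min_le_right x₀ x], by nlinarith [le_max_right x₀ x]⟩
  have key := ODE_solution_unique_of_mem_Icc (v := vf) (s := fun _ => Set.univ) (K := K)
    (fun t _ => hlip t) hmem
    (continuousOn_of_forall_continuousAt fun t _ => (hF' t).continuousAt)
    (fun t _ => hF' t) (fun t _ => trivial)
    (continuousOn_of_forall_continuousAt fun t _ => (hG' t).continuousAt)
    (fun t _ => hG' t) (fun t _ => trivial) heq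
  have := key hxmem
  simp only [hF, hG, Prod.mk.injEq] at this
  exact this

private lemma akns_det {p q : ℝ → ℂ} {E : ℂ} {u v w z : ℝ → ℂ}
    (hu : ∀ t, HasDerivAt u (-I*E*u t + q t*w t) t)
    (hv : ∀ t, HasDerivAt v (-I*E*v t + q t*z t) t)
    (hw : ∀ t, HasDerivAt w (p t*u t + I*E*w t) t)
    (hz : ∀ t, HasDerivAt z (p t*v t + I*E*z t) t)
    (h0 : u 0 * z 0 - v 0 * w 0 = 1) (y : ℝ) :
    u y * z y - v y * w y = 1 := by
  have hW : ∀ t, HasDerivAt (fun r => u r * z r - v r * w r) 0 t := by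
    intro t
    have h := ((hu t).mul (hz t)).sub ((hv t).mul (hw t))
    exact h.congr_deriv (by ring)
  have hc := is_const_of_deriv_eq_zero (f := fun r => u r * z r - v r * w r)
    (fun t => (hW t).differentiableAt) (fun t => (hW t).deriv) y 0
  simpa [h0] using hc
private lemma akns_core (p q : ℝ → ℂ) (E : ℂ) (Ω : ℝ)
    (hq1 : Differentiable ℝ q)
    (hpper : ∀ t, p (t + Ω) = p t) (hqper : ∀ t, q (t + Ω) = q t)
    (u v w z : ℝ → ℂ)
    (hu : ∀ t, HasDerivAt u (-I*E*u t + q t*w t) t)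
    (hv : ∀ t, HasDerivAt v (-I*E*v t + q t*z t) t)
    (hw : ∀ t, HasDerivAt w (p t*u t + I*E*w t) t)
    (hz : ∀ t, HasDerivAt z (p t*v t + I*E*z t) t)
    (hdet : ∀ t, u t * z t - v t * w t = 1)
    (x : ℝ) :
    q x * (2 * (-(u (x+Ω) * v x) + v (x+Ω) * u x) * deriv (deriv (fun y => -(u (y+Ω) * v y) + v (y+Ω) * u y)) x
        - (deriv (fun y => -(u (y+Ω) * v y) + v (y+Ω) * u y) x) ^ 2
        + 4 * (E ^ 2 - p x * q x) * (-(u (x+Ω) * v x) + v (x+Ω) * u x) ^ 2)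
      - deriv q x * (2 * (-(u (x+Ω) * v x) + v (x+Ω) * u x) * deriv (fun y => -(u (y+Ω) * v y) + v (y+Ω) * u y) x
        + 4 * I * E * (-(u (x+Ω) * v x) + v (x+Ω) * u x) ^ 2)
    = -(q x) ^ 3 * (((u (x+Ω) * z x - v (x+Ω) * w x) + (-(w (x+Ω) * v x) + z (x+Ω) * u x)) ^ 2 - 4) := by
  have hq' : ∀ t, HasDerivAt q (deriv q t) t := fun t => (hq1 t).hasDerivAt
  have hush : ∀ t, HasDerivAt (fun r => u (r+Ω)) (-I*E*u (t+Ω) + q t*w (t+Ω)) t := by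
    intro t
    have h := HasDerivAt.comp_add_const t Ω (hu (t + Ω))
    simpa [hqper t] using h
  have hvsh : ∀ t, HasDerivAt (fun r => v (r+Ω)) (-I*E*v (t+Ω) + q t*z (t+Ω)) t := by
    intro t
    have h := HasDerivAt.comp_add_const t Ω (hv (t + Ω))
    simpa [hqper t] using h
  have hwsh : ∀ t, HasDerivAt (fun r => w (r+Ω)) (p t*u (t+Ω) + I*E*w (t+Ω)) t := by
    intro t
    have h := HasDerivAt.comp_add_const t Ω (hw (t + Ω))
    simpa [hpper t] using h
  have hzsh : ∀ t, HasDerivAt (fun r => z (r+Ω)) (p t*v (t+Ω) + I*E*z (t+Ω)) t := by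
    intro t
    have h := HasDerivAt.comp_add_const t Ω (hz (t + Ω))
    simpa [hpper t] using h
  have hb1 : ∀ t, HasDerivAt (fun y => -(u (y+Ω) * v y) + v (y+Ω) * u y)
      (-((-I*E*u (t+Ω) + q t*w (t+Ω)) * v t + u (t+Ω) * (-I*E*v t + q t*z t)) + ((-I*E*v (t+Ω) + q t*z (t+Ω)) * u t + v (t+Ω) * (-I*E*u t + q t*w t))) t := by
    intro t
    exact (((hush t).mul (hv t)).neg).add ((hvsh t).mul (hu t))
  have hd1 : deriv (fun y => -(u (y+Ω) * v y) + v (y+Ω) * u y) = fun t => -((-I*E*u (t+Ω) + q t*w (t+Ω)) * v t + u (t+Ω) * (-I*E*v t + q t*z t)) + ((-I*E*v (t+Ω) + q t*z (t+Ω)) * u t + v (t+Ω) * (-I*E*u t + q t*w t)) :=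
    funext fun t => (hb1 t).deriv
  have hA : HasDerivAt (fun t => -I*E*u (t+Ω) + q t*w (t+Ω))
      ((-I*E * (-I*E*u (x+Ω) + q x*w (x+Ω)) + (deriv q x * w (x+Ω) + q x * (p x*u (x+Ω) + I*E*w (x+Ω))))) x := ((hush x).const_mul (-I*E)).add ((hq' x).mul (hwsh x))
  have hB : HasDerivAt (fun t => -I*E*v t + q t*z t)
      ((-I*E * (-I*E*v x + q x*z x) + (deriv q x * z x + q x * (p x*v x + I*E*z x)))) x := ((hv x).const_mul (-I*E)).add ((hq' x).mul (hz x))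
  have hC : HasDerivAt (fun t => -I*E*v (t+Ω) + q t*z (t+Ω))
      ((-I*E * (-I*E*v (x+Ω) + q x*z (x+Ω)) + (deriv q x * z (x+Ω) + q x * (p x*v (x+Ω) + I*E*z (x+Ω))))) x := ((hvsh x).const_mul (-I*E)).add ((hq' x).mul (hzsh x))
  have hD : HasDerivAt (fun t => -I*E*u t + q t*w t)
      ((-I*E * (-I*E*u x + q x*w x) + (deriv q x * w x + q x * (p x*u x + I*E*w x)))) x := ((hu x).const_mul (-I*E)).add ((hq' x).mul (hw x))
  have hcomb : HasDerivAt (fun t => -((-I*E*u (t+Ω) + q t*w (t+Ω)) * v t + u (t+Ω) * (-I*E*v t + q t*z t)) + ((-I*E*v (t+Ω) + q t*z (t+Ω)) * u t + v (t+Ω) * (-I*E*u t + q t*w t)))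
      (-(((-I*E * (-I*E*u (x+Ω) + q x*w (x+Ω)) + (deriv q x * w (x+Ω) + q x * (p x*u (x+Ω) + I*E*w (x+Ω)))) * v x + (-I*E*u (x+Ω) + q x*w (x+Ω)) * (-I*E*v x + q x*z x)) + ((-I*E*u (x+Ω) + q x*w (x+Ω)) * (-I*E*v x + q x*z x) + u (x+Ω) * (-I*E * (-I*E*v x + q x*z x) + (deriv q x * z x + q x * (p x*v x + I*E*z x))))) + (((-I*E * (-I*E*v (x+Ω) + q x*z (x+Ω)) + (deriv q x * z (x+Ω) + q x * (p x*v (x+Ω) + I*E*z (x+Ω)))) * u x + (-I*E*v (x+Ω) + q x*z (x+Ω)) * (-I*E*u x + q x*w x)) + ((-I*E*v (x+Ω) + q x*z (x+Ω)) * (-I*E*u x + q x*w x) + v (x+Ω) * (-I*E * (-I*E*u x + q x*w x) + (deriv q x * w x + q x * (p x*u x + I*E*w x)))))) x :=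
    (((hA.mul (hv x)).add ((hush x).mul hB)).neg).add ((hC.mul (hu x)).add ((hvsh x).mul hD))
  have e2 : deriv (deriv (fun y => -(u (y+Ω) * v y) + v (y+Ω) * u y)) x = -(((-I*E * (-I*E*u (x+Ω) + q x*w (x+Ω)) + (deriv q x * w (x+Ω) + q x * (p x*u (x+Ω) + I*E*w (x+Ω)))) * v x + (-I*E*u (x+Ω) + q x*w (x+Ω)) * (-I*E*v x + q x*z x)) + ((-I*E*u (x+Ω) + q x*w (x+Ω)) * (-I*E*v x + q x*z x) + u (x+Ω) * (-I*E * (-I*E*v x + q x*z x) + (deriv q x * z x + q x * (p x*v x + I*E*z x))))) + (((-I*E * (-I*E*v (x+Ω) + q x*z (x+Ω)) + (deriv q x * z (x+Ω) + q x * (p x*v (x+Ω) + I*E*z (x+Ω)))) * u x + (-I*E*v (x+Ω) + q x*z (x+Ω)) * (-I*E*u x + q x*w x)) + ((-I*E*v (x+Ω) + q x*z (x+Ω)) * (-I*E*u x + q x*w x) + v (x+Ω) * (-I*E * (-I*E*u x + q x*w x) + (deriv q x * w x + q x * (p x*u x + I*E*w x))))) := by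
    rw [hd1]; exact hcomb.deriv
  rw [e2, (hb1 x).deriv]
  linear_combination (4*(q x)^3*(u (x+Ω)*z (x+Ω) - v (x+Ω)*w (x+Ω))) * hdet x
    + (4*(q x)^3) * hdet (x+Ω)
    + (4*(q x)*E^2*(v x*u (x+Ω) - u x*v (x+Ω))^2) * Complex.I_sq


/-- The upper-right entry `g(E,x)` of the monodromy matrix
`Φ(E, x+Ω, x)` satisfies
`q (2 g g_xx - g_x² + 4(E² - pq) g²) - q_x (2 g g_x + 4iE g²) = -q³ (Δ(E)² - 4)`,
where `Δ(E) = tr Φ(E, x+Ω, x)`. -/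
theorem monodromy_upper_right_entry_ode
    (p q : ℝ → ℂ) (Ω : ℝ) (hΩ : 0 < Ω)
    (hp : ContDiff ℝ 1 p) (hq : ContDiff ℝ 1 q)
    (hpper : ∀ x, p (x + Ω) = p x) (hqper : ∀ x, q (x + Ω) = q x)
    (Φ : ℂ → ℝ → ℝ → Matrix (Fin 2) (Fin 2) ℂ)
    (hΦ : IsFundamentalMatrix p q Φ) :
    ∀ (E : ℂ) (x : ℝ),
      q x * (2 * Φ E (x + Ω) x 0 1 * deriv (deriv (fun y => Φ E (y + Ω) y 0 1)) x
          - (deriv (fun y => Φ E (y + Ω) y 0 1) x) ^ 2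
          + 4 * (E ^ 2 - p x * q x) * (Φ E (x + Ω) x 0 1) ^ 2)
        - deriv q x * (2 * Φ E (x + Ω) x 0 1 * deriv (fun y => Φ E (y + Ω) y 0 1) x
          + 4 * I * E * (Φ E (x + Ω) x 0 1) ^ 2)
      = -(q x) ^ 3 * ((Matrix.trace (Φ E (x + Ω) x)) ^ 2 - 4) := by
  intro E x
  obtain ⟨hcol0, hid0⟩ := hΦ E 0
  have hu : ∀ t, HasDerivAt (fun y => Φ E y 0 0 0)
      (-I*E*(Φ E t 0 0 0) + q t*(Φ E t 0 1 0)) t :=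
    fun t => (aknsHasDeriv (hcol0 0) t).1
  have hw : ∀ t, HasDerivAt (fun y => Φ E y 0 1 0)
      (p t*(Φ E t 0 0 0) + I*E*(Φ E t 0 1 0)) t :=
    fun t => (aknsHasDeriv (hcol0 0) t).2
  have hv : ∀ t, HasDerivAt (fun y => Φ E y 0 0 1)
      (-I*E*(Φ E t 0 0 1) + q t*(Φ E t 0 1 1)) t :=
    fun t => (aknsHasDeriv (hcol0 1) t).1
  have hz : ∀ t, HasDerivAt (fun y => Φ E y 0 1 1)
      (p t*(Φ E t 0 0 1) + I*E*(Φ E t 0 1 1)) t :=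
    fun t => (aknsHasDeriv (hcol0 1) t).2
  obtain ⟨Cp, hCp⟩ : ∃ C, ∀ t, ‖p t‖ ≤ C := by
    obtain ⟨C, hC⟩ := isBounded_iff_forall_norm_le.mp
      (Function.Periodic.isBounded_of_continuous hpper (ne_of_gt hΩ) hp.continuous)
    exact ⟨C, fun t => hC _ ⟨t, rfl⟩⟩
  obtain ⟨Cq, hCq⟩ : ∃ C, ∀ t, ‖q t‖ ≤ C := by
    obtain ⟨C, hC⟩ := isBounded_iff_forall_norm_le.mp
      (Function.Periodic.isBounded_of_continuous hqper (ne_of_gt hΩ) hq.continuous)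
    exact ⟨C, fun t => hC _ ⟨t, rfl⟩⟩
  have h0 : Φ E 0 0 0 0 * Φ E 0 0 1 1 - Φ E 0 0 0 1 * Φ E 0 0 1 0 = 1 := by
    rw [hid0]
    simp [Matrix.one_apply]
  have hdet : ∀ y, Φ E y 0 0 0 * Φ E y 0 1 1 - Φ E y 0 0 1 * Φ E y 0 1 0 = 1 :=
    fun y => akns_det hu hv hw hz h0 y
  have cocycle : ∀ s t : ℝ,
      Φ E t s 0 0 = Φ E t 0 0 0 * Φ E s 0 1 1 - Φ E t 0 0 1 * Φ E s 0 1 0 ∧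
      Φ E t s 0 1 = -(Φ E t 0 0 0 * Φ E s 0 0 1) + Φ E t 0 0 1 * Φ E s 0 0 0 ∧
      Φ E t s 1 0 = Φ E t 0 1 0 * Φ E s 0 1 1 - Φ E t 0 1 1 * Φ E s 0 1 0 ∧
      Φ E t s 1 1 = -(Φ E t 0 1 0 * Φ E s 0 0 1) + Φ E t 0 1 1 * Φ E s 0 0 0 := by
    intro s t
    obtain ⟨hcols, hids⟩ := hΦ E s
    have hg01 : ∀ r, HasDerivAt (fun y => Φ E y 0 0 0 * Φ E s 0 1 1 - Φ E y 0 0 1 * Φ E s 0 1 0)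
        (-I*E*(Φ E r 0 0 0 * Φ E s 0 1 1 - Φ E r 0 0 1 * Φ E s 0 1 0)
          + q r*(Φ E r 0 1 0 * Φ E s 0 1 1 - Φ E r 0 1 1 * Φ E s 0 1 0)) r := by
      intro r
      have h := ((hu r).mul_const (Φ E s 0 1 1)).sub ((hv r).mul_const (Φ E s 0 1 0))
      exact h.congr_deriv (by ring)
    have hg02 : ∀ r, HasDerivAt (fun y => Φ E y 0 1 0 * Φ E s 0 1 1 - Φ E y 0 1 1 * Φ E s 0 1 0)
        (p r*(Φ E r 0 0 0 * Φ E s 0 1 1 - Φ E r 0 0 1 * Φ E s 0 1 0)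
          + I*E*(Φ E r 0 1 0 * Φ E s 0 1 1 - Φ E r 0 1 1 * Φ E s 0 1 0)) r := by
      intro r
      have h := ((hw r).mul_const (Φ E s 0 1 1)).sub ((hz r).mul_const (Φ E s 0 1 0))
      exact h.congr_deriv (by ring)
    have hg11 : ∀ r, HasDerivAt (fun y => -(Φ E y 0 0 0 * Φ E s 0 0 1) + Φ E y 0 0 1 * Φ E s 0 0 0)
        (-I*E*(-(Φ E r 0 0 0 * Φ E s 0 0 1) + Φ E r 0 0 1 * Φ E s 0 0 0)
          + q r*(-(Φ E r 0 1 0 * Φ E s 0 0 1) + Φ E r 0 1 1 * Φ E s 0 0 0)) r := by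
      intro r
      have h := (((hu r).mul_const (Φ E s 0 0 1)).neg).add ((hv r).mul_const (Φ E s 0 0 0))
      exact h.congr_deriv (by ring)
    have hg12 : ∀ r, HasDerivAt (fun y => -(Φ E y 0 1 0 * Φ E s 0 0 1) + Φ E y 0 1 1 * Φ E s 0 0 0)
        (p r*(-(Φ E r 0 0 0 * Φ E s 0 0 1) + Φ E r 0 0 1 * Φ E s 0 0 0)
          + I*E*(-(Φ E r 0 1 0 * Φ E s 0 0 1) + Φ E r 0 1 1 * Φ E s 0 0 0)) r := by
      intro r
      have h := (((hw r).mul_const (Φ E s 0 0 1)).neg).add ((hz r).mul_const (Φ E s 0 0 0))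
      exact h.congr_deriv (by ring)
    have init01 : Φ E s s 0 0 = Φ E s 0 0 0 * Φ E s 0 1 1 - Φ E s 0 0 1 * Φ E s 0 1 0 := by
      rw [hids, hdet s]
      simp [Matrix.one_apply]
    have init02 : Φ E s s 1 0 = Φ E s 0 1 0 * Φ E s 0 1 1 - Φ E s 0 1 1 * Φ E s 0 1 0 := by
      have h' : Φ E s 0 1 0 * Φ E s 0 1 1 - Φ E s 0 1 1 * Φ E s 0 1 0 = 0 := by ring
      rw [hids, h']
      simp [Matrix.one_apply]
    have init11 : Φ E s s 0 1 = -(Φ E s 0 0 0 * Φ E s 0 0 1) + Φ E s 0 0 1 * Φ E s 0 0 0 := by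
      have h' : -(Φ E s 0 0 0 * Φ E s 0 0 1) + Φ E s 0 0 1 * Φ E s 0 0 0 = 0 := by ring
      rw [hids, h']
      simp [Matrix.one_apply]
    have init12 : Φ E s s 1 1 = -(Φ E s 0 1 0 * Φ E s 0 0 1) + Φ E s 0 1 1 * Φ E s 0 0 0 := by
      have h' : -(Φ E s 0 1 0 * Φ E s 0 0 1) + Φ E s 0 1 1 * Φ E s 0 0 0 = 1 := by
        linear_combination hdet s
      rw [hids, h']
      simp [Matrix.one_apply]
    have e0 := akns_unique hCp hCq (fun r => aknsHasDeriv (hcols 0) r)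
      (fun r => ⟨hg01 r, hg02 r⟩) init01 init02 t
    have e1 := akns_unique hCp hCq (fun r => aknsHasDeriv (hcols 1) r)
      (fun r => ⟨hg11 r, hg12 r⟩) init11 init12 t
    exact ⟨e0.1, e1.1, e0.2, e1.2⟩
  have hfg : (fun y => Φ E (y + Ω) y 0 1)
      = fun y => -(Φ E (y+Ω) 0 0 0 * Φ E y 0 0 1) + Φ E (y+Ω) 0 0 1 * Φ E y 0 0 0 :=
    funext fun y => (cocycle y (y+Ω)).2.1
  rw [Matrix.trace_fin_two, hfg, (cocycle x (x+Ω)).2.1, (cocycle x (x+Ω)).1,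
    (cocycle x (x+Ω)).2.2.2]
  exact akns_core p q E Ω (hq.differentiable one_ne_zero) hpper hqper
    (fun y => Φ E y 0 0 0) (fun y => Φ E y 0 0 1) (fun y => Φ E y 0 1 0) (fun y => Φ E y 0 1 1)
    hu hv hw hz hdet x
end
end

section
/- Let p, q : ℝ → ℂ be twice continuously differentiable and periodic with period Ω > 0, with q(x̄) ≠ 0 for some x̄ ∈ ℝ. For E₀ ∈ ℂ let s(E₀) denote the order of the zero of the entire function E ↦ Δ(E)² − 4 at E₀, and for x ∈ ℝ let δ(E₀, x) denote the order of the zero of the entire function E ↦ g(E,x) at E₀ (valued in ℕ ∪ {∞}); set δ_i(E₀) = inf_{x ∈ ℝ} δ(E₀, x). Then s(E₀) − 2 δ_i(E₀) ≥ 0 for every E₀ ∈ ℂ; i.e., the order of vanishing of Δ² − 4 at any point is at least twice the minimal algebraic multiplicity of that point as a Dirichlet eigenvalue over all base points x. -/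
open Complex

noncomputable section

/-!
With `P = Φ(E, x, x̄)` (determinant one) the monodromy matrices are conjugate,
`Φ(E, x + Ω, x) = P Φ(E, x̄ + Ω, x̄) P⁻¹`, so writing `Φ(E, x̄ + Ω, x̄) = [[a, b], [c, d]]`,
`g(E, x) = P₀₀² b - P₀₀ P₀₁ (a - d) - P₀₁² c` and `Δ² - 4 = (a - d)² + 4 b c`.
Everything is entire in `E`: Grönwall estimates make the difference quotients in `E` Cauchy.
If all `g(·, x)` vanish to order `k + 1` at `E₀` while `a - d = (E - E₀)ᵏ α` and
`c = (E - E₀)ᵏ γ`, comparing `(E - E₀)ᵏ`-coefficients gives `P₀₁ (P₀₀ α + P₀₁ γ) = 0` at `E₀`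
for every `x`. As `x → x̄`, `P₀₀ → 1` and `P₀₁ → 0` with `P₀₁ ≠ 0` for `x ≠ x̄` (its derivative
at `x̄` is `q(x̄) ≠ 0`), which forces `α(E₀) = γ(E₀) = 0`. So `a - d`, `b = g(·, x̄)` and `c` all
vanish to order `δ_i(E₀)`, and `Δ² - 4` to order `2 δ_i(E₀)`.
-/

open Filter Topology Metric
open scoped Matrix

section LinearODE

variable {W : Type*} [NormedAddCommGroup W] [NormedSpace ℝ W]

theorem gronwallBound_δ0_eq_mul (K ε x : ℝ) :
    gronwallBound 0 K ε x = ε * gronwallBound 0 K 1 x := by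
  unfold gronwallBound
  split_ifs <;> ring

theorem norm_le_gronwallBound_of_norm_deriv_le {f f' : ℝ → W} {x₀ T K ε δ : ℝ}
    (hf : ∀ t, HasDerivAt f (f' t) t) (hK : 0 ≤ K) (hε : 0 ≤ ε) (h₀ : ‖f x₀‖ ≤ δ)
    (hbound : ∀ t ∈ closedBall x₀ T, ‖f' t‖ ≤ K * ‖f t‖ + ε) :
    ∀ t ∈ closedBall x₀ T, ‖f t‖ ≤ gronwallBound δ K ε T := by
  intro t ht
  have hδ : 0 ≤ δ := (norm_nonneg _).trans h₀
  rw [Real.closedBall_eq_Icc] at hbound ht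
  have hT : 0 ≤ T := by linarith [ht.1, ht.2]
  rcases le_total x₀ t with hxt | htx
  · calc ‖f t‖ ≤ gronwallBound δ K ε (t - x₀) :=
          norm_le_gronwallBound_of_norm_deriv_right_le
            (fun s _ => (hf s).continuousAt.continuousWithinAt) (fun s _ => (hf s).hasDerivWithinAt)
            h₀ (fun s hs => hbound s ⟨by linarith [ht.1, hs.1], by linarith [ht.2, hs.2]⟩) t
            ⟨hxt, le_rfl⟩
      _ ≤ gronwallBound δ K ε T := gronwallBound_mono hδ hε hK (by linarith [ht.2])
  · have hrefl : ∀ s, HasDerivAt (fun s => f (-s)) (-f' (-s)) s := fun s => by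
      simpa [Function.comp_def] using (hf (-s)).scomp s (hasDerivAt_neg s)
    calc ‖f t‖ = ‖(fun s => f (-s)) (-t)‖ := by simp
      _ ≤ gronwallBound δ K ε (-t - -x₀) :=
          norm_le_gronwallBound_of_norm_deriv_right_le
            (fun s _ => (hrefl s).continuousAt.continuousWithinAt)
            (fun s _ => (hrefl s).hasDerivWithinAt) (by simpa using h₀)
            (fun s hs => by
              simpa using hbound (-s) ⟨by linarith [ht.1, hs.2], by linarith [ht.2, hs.1]⟩)
            (-t) ⟨by linarith, le_rfl⟩
      _ ≤ gronwallBound δ K ε T := gronwallBound_mono hδ hε hK (by linarith [ht.1])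

theorem Matrix.norm_mulVec_le_sum {m n α : Type*} [Fintype m] [Fintype n] [SeminormedRing α]
    (A : Matrix m n α) (v : n → α) : ‖A *ᵥ v‖ ≤ (∑ i, ∑ j, ‖A i j‖) * ‖v‖ := by
  refine (pi_norm_le_iff_of_nonneg (by positivity)).2 fun i => ?_
  calc ‖∑ j, A i j * v j‖ ≤ ∑ j, ‖A i j‖ * ‖v‖ :=
        norm_sum_le_of_le _ fun j _ =>
          (norm_mul_le _ _).trans (by gcongr; exact norm_le_pi_norm v j)
    _ = (∑ j, ‖A i j‖) * ‖v‖ := (Finset.sum_mul ..).symm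
    _ ≤ (∑ i, ∑ j, ‖A i j‖) * ‖v‖ := by
        gcongr
        exact Finset.single_le_sum (f := fun i => ∑ j, ‖A i j‖) (fun _ _ => by positivity)
          (Finset.mem_univ i)

variable {ι 𝕜 : Type*} [Fintype ι] [RCLike 𝕜] {A : ℝ → Matrix ι ι 𝕜}

theorem norm_le_gronwallBound_of_hasDerivAt_mulVec_add {F h : ℝ → ι → 𝕜} {x₀ T K ε δ : ℝ}
    (hF : ∀ t, HasDerivAt F (A t *ᵥ F t + h t) t) (hK : 0 ≤ K) (hε : 0 ≤ ε) (h₀ : ‖F x₀‖ ≤ δ)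
    (hA : ∀ t ∈ closedBall x₀ T, ∑ i, ∑ j, ‖A t i j‖ ≤ K) (hh : ∀ t ∈ closedBall x₀ T, ‖h t‖ ≤ ε) :
    ∀ t ∈ closedBall x₀ T, ‖F t‖ ≤ gronwallBound δ K ε T :=
  norm_le_gronwallBound_of_norm_deriv_le hF hK hε h₀ fun t ht =>
    (norm_add_le _ _).trans <| add_le_add
      ((Matrix.norm_mulVec_le_sum _ _).trans (by gcongr; exact hA t ht)) (hh t ht)

theorem eq_of_hasDerivAt_mulVec (hA : ∀ i j, Continuous fun t => A t i j) {F G : ℝ → ι → 𝕜}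
    (hF : ∀ t, HasDerivAt F (A t *ᵥ F t) t) (hG : ∀ t, HasDerivAt G (A t *ᵥ G t) t) {t₀ : ℝ}
    (h₀ : F t₀ = G t₀) : F = G := by
  funext t
  obtain ⟨K, hK⟩ := (isCompact_closedBall t₀ |t - t₀|).exists_bound_of_continuousOn
    (f := fun s => ∑ i, ∑ j, ‖A s i j‖) (by fun_prop)
  have ht : t ∈ closedBall t₀ |t - t₀| := by simp [Real.dist_eq]
  have hK₀ : 0 ≤ K := (norm_nonneg _).trans (hK t₀ (mem_closedBall_self (abs_nonneg _)))
  have hdiff : ∀ s, HasDerivAt (F - G) (A s *ᵥ (F - G) s + 0) s := fun s => by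
    simpa [Matrix.mulVec_sub] using (hF s).sub (hG s)
  have := norm_le_gronwallBound_of_hasDerivAt_mulVec_add hdiff hK₀ le_rfl
    (show ‖(F - G) t₀‖ ≤ 0 by simp [h₀])
    (fun s hs => (le_abs_self _).trans (by simpa using hK s hs)) (by simp) t ht
  rw [gronwallBound_ε0_δ0] at this
  exact sub_eq_zero.1 (norm_le_zero_iff.1 this)

end LinearODE

theorem differentiableAt_of_norm_slope_sub_le {𝕜 W : Type*} [NontriviallyNormedField 𝕜]
    [NormedAddCommGroup W] [NormedSpace 𝕜 W] [CompleteSpace W] {f : 𝕜 → W} {x : 𝕜} {r C : ℝ}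
    (hr : 0 < r)
    (h : ∀ a ∈ ball x r, ∀ b ∈ ball x r, a ≠ x → b ≠ x →
      ‖slope f x a - slope f x b‖ ≤ C * ‖a - b‖) :
    DifferentiableAt 𝕜 f x := by
  have hcauchy : Cauchy (map (slope f x) (𝓝[≠] x)) := by
    refine cauchy_map_iff.2 ⟨inferInstance, tendsto_uniformity_iff_dist_tendsto_zero.2 ?_⟩
    have hlim : Tendsto (fun p : 𝕜 × 𝕜 => C * ‖p.1 - p.2‖) (𝓝[≠] x ×ˢ 𝓝[≠] x) (𝓝 0) := by
      have : Continuous fun p : 𝕜 × 𝕜 => C * ‖p.1 - p.2‖ := by fun_prop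
      replace := this.tendsto (x, x)
      simpa using this.mono_left
        (by rw [nhds_prod_eq]; exact prod_mono nhdsWithin_le_nhds nhdsWithin_le_nhds)
    refine squeeze_zero' (Eventually.of_forall fun _ => dist_nonneg) ?_ hlim
    have hball : ∀ᶠ a in 𝓝[≠] x, a ∈ ball x r := mem_nhdsWithin_of_mem_nhds (ball_mem_nhds x hr)
    have hnear : ∀ᶠ a in 𝓝[≠] x, a ∈ ball x r ∧ a ≠ x := hball.and self_mem_nhdsWithin
    filter_upwards [hnear.prod_mk hnear] with p hp
    rw [dist_eq_norm]
    exact h _ hp.1.1 _ hp.2.1 hp.1.2 hp.2.2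
  obtain ⟨L, hL⟩ := cauchy_map_iff_exists_tendsto.1 hcauchy
  exact (hasDerivAt_iff_tendsto_slope.2 hL).differentiableAt

section Order

variable {𝕜 : Type*} [NontriviallyNormedField 𝕜]

theorem natCast_lt_analyticOrderAt_pow_smul_iff {E : Type*} [NormedAddCommGroup E]
    [NormedSpace 𝕜 E] {f : 𝕜 → E} {z₀ : 𝕜} (hf : AnalyticAt 𝕜 f z₀) (k : ℕ) :
    (k : ℕ∞) < analyticOrderAt (fun z => (z - z₀) ^ k • f z) z₀ ↔ f z₀ = 0 := by
  rw [show (fun z => (z - z₀) ^ k • f z) = (· - z₀) ^ k • f from rfl,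
    analyticOrderAt_smul (by fun_prop) hf, analyticOrderAt_centeredMonomial,
    ← hf.analyticOrderAt_ne_zero]
  simpa [pos_iff_ne_zero] using
    ENat.add_lt_add_iff_left (ENat.natCast_ne_top k) (n := 0) (m := analyticOrderAt f z₀)

theorem eq_zero_and_eq_zero_of_eventually_mul_add_eq_zero {X : Type*} {l : Filter X} [l.NeBot]
    {f₀ f₁ : X → 𝕜} {α β : 𝕜} (h₀ : Tendsto f₀ l (𝓝 1)) (h₁ : Tendsto f₁ l (𝓝 0))
    (hne : ∀ᶠ x in l, f₁ x ≠ 0) (h : ∀ᶠ x in l, f₁ x * (f₀ x * α + f₁ x * β) = 0) :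
    α = 0 ∧ β = 0 := by
  have hlin : ∀ᶠ x in l, f₀ x * α + f₁ x * β = 0 :=
    (h.and hne).mono fun x hx => (mul_eq_zero.1 hx.1).resolve_left hx.2
  have hα : α = 0 := by
    have hlim : Tendsto (fun x => f₀ x * α + f₁ x * β) l (𝓝 (1 * α + 0 * β)) :=
      (h₀.mul_const α).add (h₁.mul_const β)
    simpa using tendsto_nhds_unique hlim (tendsto_const_nhds.congr' (hlin.mono fun x hx => hx.symm))
  obtain ⟨x, hx, hx'⟩ := (hlin.and hne).exists
  rw [hα, mul_zero, zero_add, mul_eq_zero] at hx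
  exact ⟨hα, hx.resolve_left hx'⟩

theorem le_analyticOrderAt_of_forall_le_analyticOrderAt_quadratic {X : Type*} {l : Filter X}
    [l.NeBot] {z₀ : 𝕜} {u b c : 𝕜 → 𝕜} {φ ψ g : X → 𝕜 → 𝕜} {m : ℕ∞}
    (hu : AnalyticAt 𝕜 u z₀) (hb : AnalyticAt 𝕜 b z₀) (hc : AnalyticAt 𝕜 c z₀)
    (hφ : ∀ x, AnalyticAt 𝕜 (φ x) z₀) (hψ : ∀ x, AnalyticAt 𝕜 (ψ x) z₀)
    (hg : ∀ x z, g x z = φ x z ^ 2 * b z - φ x z * ψ x z * u z - ψ x z ^ 2 * c z)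
    (hφ₀ : Tendsto (φ · z₀) l (𝓝 1)) (hψ₀ : Tendsto (ψ · z₀) l (𝓝 0))
    (hψne : ∀ᶠ x in l, ψ x z₀ ≠ 0) (hmb : m ≤ analyticOrderAt b z₀)
    (hmg : ∀ x, m ≤ analyticOrderAt (g x) z₀) :
    m ≤ analyticOrderAt u z₀ ∧ m ≤ analyticOrderAt c z₀ := by
  suffices h : ∀ k : ℕ, (k : ℕ∞) ≤ m → k ≤ analyticOrderAt u z₀ ∧ k ≤ analyticOrderAt c z₀ from
    ⟨ENat.forall_natCast_le_iff_le.1 fun k hk => (h k hk).1,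
      ENat.forall_natCast_le_iff_le.1 fun k hk => (h k hk).2⟩
  intro k
  induction k with
  | zero => simp
  | succ k ih =>
    intro hk
    have hkm : (k : ℕ∞) < m := lt_of_lt_of_le (by exact_mod_cast k.lt_succ_self) hk
    obtain ⟨u', hu', hu_eq⟩ := (natCast_le_analyticOrderAt hu).1 (ih hkm.le).1
    obtain ⟨c', hc', hc_eq⟩ := (natCast_le_analyticOrderAt hc).1 (ih hkm.le).2
    have hlead (x : X) : ψ x z₀ * (φ x z₀ * u' z₀ + ψ x z₀ * c' z₀) = 0 := by
      refine (natCast_lt_analyticOrderAt_pow_smul_iff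
        ((hψ x).mul (((hφ x).mul hu').add ((hψ x).mul hc'))) k).1 ?_
      have hrepr : (fun z => (z - z₀) ^ k • (ψ x * (φ x * u' + ψ x * c')) z)
          =ᶠ[𝓝 z₀] φ x ^ 2 * b - g x := by
        filter_upwards [hu_eq, hc_eq] with z hzu hzc
        simp only [Pi.sub_apply, Pi.add_apply, Pi.mul_apply, Pi.pow_apply, hg x z, hzu, hzc,
          smul_eq_mul]
        ring
      rw [analyticOrderAt_congr hrepr]
      refine hkm.trans_le (le_trans (le_min ?_ (hmg x)) le_analyticOrderAt_sub)
      rw [analyticOrderAt_mul ((hφ x).pow 2) hb]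
      exact hmb.trans le_add_self
    obtain ⟨hu'₀, hc'₀⟩ := eq_zero_and_eq_zero_of_eventually_mul_add_eq_zero hφ₀ hψ₀ hψne
      (Eventually.of_forall hlead)
    rw [Nat.cast_succ, ENat.add_one_le_iff (ENat.natCast_ne_top k),
      ENat.add_one_le_iff (ENat.natCast_ne_top k), analyticOrderAt_congr hu_eq,
      analyticOrderAt_congr hc_eq, natCast_lt_analyticOrderAt_pow_smul_iff hu',
      natCast_lt_analyticOrderAt_pow_smul_iff hc']
    exact ⟨hu'₀, hc'₀⟩

theorem two_mul_le_analyticOrderAt_sq_add_mul {z₀ : 𝕜} {u b c : 𝕜 → 𝕜} {m : ℕ∞}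
    (hu : AnalyticAt 𝕜 u z₀) (hb : AnalyticAt 𝕜 b z₀) (hc : AnalyticAt 𝕜 c z₀)
    (hmu : m ≤ analyticOrderAt u z₀) (hmb : m ≤ analyticOrderAt b z₀)
    (hmc : m ≤ analyticOrderAt c z₀) (w : 𝕜) :
    2 * m ≤ analyticOrderAt (fun z => u z ^ 2 + w * (b z * c z)) z₀ := by
  refine le_trans (le_min ?_ ?_)
    (le_analyticOrderAt_add (f := u ^ 2) (g := fun z => w * (b z * c z)))
  · rw [analyticOrderAt_pow hu, two_mul, two_nsmul]
    exact add_le_add hmu hmu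
  · rw [show (fun z => w * (b z * c z)) = (fun _ => w) * (b * c) from rfl,
      analyticOrderAt_mul analyticAt_const (hb.mul hc), analyticOrderAt_mul hb hc, two_mul]
    exact (add_le_add hmb hmc).trans le_add_self

end Order

theorem Matrix.trace_sq_sub_four_of_det_eq_one {R : Type*} [CommRing R]
    {A : Matrix (Fin 2) (Fin 2) R} (hA : A.det = 1) :
    A.trace ^ 2 - 4 = (A 0 0 - A 1 1) ^ 2 + 4 * (A 0 1 * A 1 0) := by
  rw [Matrix.det_fin_two] at hA
  rw [Matrix.trace_fin_two]
  linear_combination 4 * hA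

/-- The AKNS system `JΨ' + QΨ = EΨ` solved for the derivative: `Ψ' = aknsMatrix p q E x *ᵥ Ψ`. -/
def aknsMatrix (p q : ℝ → ℂ) (E : ℂ) (x : ℝ) : Matrix (Fin 2) (Fin 2) ℂ :=
  !![-I * E, q x; p x, I * E]

section AKNS

variable {p q : ℝ → ℂ} {Φ : ℂ → ℝ → ℝ → Matrix (Fin 2) (Fin 2) ℂ}

theorem aknsMatrix_sub_aknsMatrix (E E' : ℂ) (x : ℝ) :
    aknsMatrix p q E' x - aknsMatrix p q E x = (E' - E) • !![-I, 0; 0, I] := by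
  ext i j
  fin_cases i <;> fin_cases j <;> simp [aknsMatrix] <;> ring

theorem sum_norm_aknsMatrix (E : ℂ) (x : ℝ) :
    ∑ i, ∑ j, ‖aknsMatrix p q E x i j‖ = ‖p x‖ + ‖q x‖ + 2 * ‖E‖ := by
  simp [aknsMatrix, Fin.sum_univ_two]
  ring

theorem continuous_aknsMatrix_apply (hp : Continuous p) (hq : Continuous q) (E : ℂ)
    (i j : Fin 2) : Continuous fun x => aknsMatrix p q E x i j := by
  fin_cases i <;> fin_cases j <;> simp [aknsMatrix] <;> fun_prop

theorem aknsMatrix_add_period {Ω : ℝ} (hpper : ∀ x, p (x + Ω) = p x)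
    (hqper : ∀ x, q (x + Ω) = q x) (E : ℂ) (x : ℝ) :
    aknsMatrix p q E (x + Ω) = aknsMatrix p q E x := by
  simp [aknsMatrix, hpper, hqper]

theorem exists_sum_norm_aknsMatrix_le (hp : Continuous p) (hq : Continuous q) (x₀ T : ℝ)
    (E₁ : ℂ) : ∃ K, 0 ≤ K ∧ ∀ E ∈ closedBall E₁ 1, ∀ t ∈ closedBall x₀ T,
      ∑ i, ∑ j, ‖aknsMatrix p q E t i j‖ ≤ K := by
  obtain ⟨C, hC⟩ := (isCompact_closedBall x₀ T).exists_bound_of_continuousOn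
    (f := fun t => ‖p t‖ + ‖q t‖) (by fun_prop)
  refine ⟨max C 0 + 2 * (‖E₁‖ + 1), by positivity, fun E hE t ht => ?_⟩
  have hpq : ‖p t‖ + ‖q t‖ ≤ max C 0 :=
    (le_abs_self _).trans ((Real.norm_eq_abs _ ▸ hC t ht).trans (le_max_left _ _))
  have hE : ‖E‖ ≤ ‖E₁‖ + 1 := norm_le_of_mem_closedBall hE
  rw [sum_norm_aknsMatrix]
  linarith

theorem norm_sub_le_of_hasDerivAt_aknsMatrix_add {E E' : ℂ} {F G h : ℝ → Fin 2 → ℂ}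
    {x₀ T K B : ℝ} (hF : ∀ t, HasDerivAt F (aknsMatrix p q E t *ᵥ F t + h t) t)
    (hG : ∀ t, HasDerivAt G (aknsMatrix p q E' t *ᵥ G t + h t) t) (h₀ : F x₀ = G x₀)
    (hK₀ : 0 ≤ K) (hK : ∀ t ∈ closedBall x₀ T, ∑ i, ∑ j, ‖aknsMatrix p q E' t i j‖ ≤ K)
    (hB : ∀ t ∈ closedBall x₀ T, ‖F t‖ ≤ B) :
    ∀ t ∈ closedBall x₀ T, ‖G t - F t‖ ≤ ‖E' - E‖ * (2 * B) * gronwallBound 0 K 1 T := by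
  intro t ht
  have hB₀ : 0 ≤ B := (norm_nonneg _).trans (hB x₀ (mem_closedBall_self (dist_nonneg.trans ht)))
  have hD (s : ℝ) : HasDerivAt (G - F)
      (aknsMatrix p q E' s *ᵥ (G - F) s + (E' - E) • (!![-I, 0; 0, I] *ᵥ F s)) s := by
    refine ((hG s).sub (hF s)).congr_deriv ?_
    rw [← Matrix.smul_mulVec, ← aknsMatrix_sub_aknsMatrix, Matrix.sub_mulVec, Pi.sub_apply,
      Matrix.mulVec_sub]
    abel
  have hforcing (s : ℝ) (hs : s ∈ closedBall x₀ T) :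
      ‖(E' - E) • (!![-I, 0; 0, I] *ᵥ F s)‖ ≤ ‖E' - E‖ * (2 * B) := by
    rw [norm_smul]
    gcongr
    have hσ : ∑ i, ∑ j, ‖(!![-I, 0; 0, I] : Matrix (Fin 2) (Fin 2) ℂ) i j‖ = 2 := by
      simp [Fin.sum_univ_two]
      norm_num
    refine (Matrix.norm_mulVec_le_sum _ _).trans ?_
    rw [hσ]
    exact mul_le_mul_of_nonneg_left (hB s hs) zero_le_two
  have := norm_le_gronwallBound_of_hasDerivAt_mulVec_add hD hK₀ (by positivity)
    (show ‖(G - F) x₀‖ ≤ 0 by simp [h₀]) hK hforcing t ht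
  rwa [gronwallBound_δ0_eq_mul] at this

namespace IsFundamentalMatrix

variable (hΦ : IsFundamentalMatrix p q Φ)
include hΦ

theorem hasDerivAt_apply (E : ℂ) (x₀ y : ℝ) (i j : Fin 2) :
    HasDerivAt (fun y => Φ E y x₀ i j) ((aknsMatrix p q E y * Φ E y x₀) i j) y := by
  obtain ⟨h₀, h₁, e₀, e₁⟩ := (hΦ E x₀).1 j y
  revert i
  refine Fin.forall_fin_two.2 ⟨h₀.hasDerivAt.congr_deriv ?_, h₁.hasDerivAt.congr_deriv ?_⟩ <;>
    simp [aknsMatrix, Matrix.mul_apply, Fin.sum_univ_two]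
  · linear_combination -I * e₀ + (deriv (fun x => Φ E x x₀ 0 j) y - q y * Φ E y x₀ 1 j) * I_sq
  · linear_combination I * e₁ + (deriv (fun x => Φ E x x₀ 1 j) y - p y * Φ E y x₀ 0 j) * I_sq

theorem hasDerivAt_mulVec (E : ℂ) (x₀ : ℝ) (v : Fin 2 → ℂ) (y : ℝ) :
    HasDerivAt (fun y => Φ E y x₀ *ᵥ v) (aknsMatrix p q E y *ᵥ (Φ E y x₀ *ᵥ v)) y := by
  rw [Matrix.mulVec_mulVec, hasDerivAt_pi]
  intro i
  simp only [Matrix.mulVec, dotProduct, Fin.sum_univ_two]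
  exact ((hΦ.hasDerivAt_apply E x₀ y i 0).mul_const (v 0)).add
    ((hΦ.hasDerivAt_apply E x₀ y i 1).mul_const (v 1))

theorem det_eq_one (E : ℂ) (x₀ y : ℝ) : (Φ E y x₀).det = 1 := by
  have hderiv : ∀ y, HasDerivAt (fun y => (Φ E y x₀).det) 0 y := fun y => by
    simp only [Matrix.det_fin_two]
    refine (((hΦ.hasDerivAt_apply E x₀ y 0 0).mul (hΦ.hasDerivAt_apply E x₀ y 1 1)).sub
      ((hΦ.hasDerivAt_apply E x₀ y 0 1).mul (hΦ.hasDerivAt_apply E x₀ y 1 0))).congr_deriv ?_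
    simp [aknsMatrix, Matrix.mul_apply, Fin.sum_univ_two]
    ring
  rw [is_const_of_deriv_eq_zero (fun y => (hderiv y).differentiableAt)
    (fun y => (hderiv y).deriv) y x₀, (hΦ E x₀).2, Matrix.det_one]

theorem tendsto_apply (E : ℂ) (x₀ : ℝ) (i j : Fin 2) :
    Tendsto (fun x => Φ E x x₀ i j) (𝓝 x₀) (𝓝 ((1 : Matrix (Fin 2) (Fin 2) ℂ) i j)) := by
  simpa [(hΦ E x₀).2] using (hΦ.hasDerivAt_apply E x₀ x₀ i j).continuousAt.tendsto

theorem eventually_apply_zero_one_ne_zero {x₀ : ℝ} (hq₀ : q x₀ ≠ 0) (E : ℂ) :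
    ∀ᶠ x in 𝓝[≠] x₀, Φ E x x₀ 0 1 ≠ 0 :=
  (hΦ.hasDerivAt_apply E x₀ x₀ 0 1).eventually_ne (by simpa [(hΦ E x₀).2, aknsMatrix] using hq₀)

theorem norm_mulVec_le_gronwallBound {E : ℂ} {x₀ T K : ℝ} (hK₀ : 0 ≤ K)
    (hK : ∀ t ∈ closedBall x₀ T, ∑ i, ∑ j, ‖aknsMatrix p q E t i j‖ ≤ K) (v : Fin 2 → ℂ) :
    ∀ t ∈ closedBall x₀ T, ‖Φ E t x₀ *ᵥ v‖ ≤ gronwallBound ‖v‖ K 0 T :=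
  norm_le_gronwallBound_of_hasDerivAt_mulVec_add (h := 0)
    (fun t => by rw [Pi.zero_apply, add_zero]; exact hΦ.hasDerivAt_mulVec E x₀ v t) hK₀ le_rfl
    (by rw [(hΦ E x₀).2, Matrix.one_mulVec]) hK (by simp)

theorem hasDerivAt_slope_mulVec {E₁ E : ℂ} (hE : E ≠ E₁) (x₀ : ℝ) (v : Fin 2 → ℂ) (t : ℝ) :
    HasDerivAt (fun t => slope (fun E => Φ E t x₀ *ᵥ v) E₁ E)
      (aknsMatrix p q E t *ᵥ slope (fun E => Φ E t x₀ *ᵥ v) E₁ E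
        + !![-I, 0; 0, I] *ᵥ (Φ E₁ t x₀ *ᵥ v)) t := by
  simp only [slope_def_module]
  refine (((hΦ.hasDerivAt_mulVec E x₀ v t).sub (hΦ.hasDerivAt_mulVec E₁ x₀ v t)).const_smul
    (E - E₁)⁻¹).congr_deriv ?_
  rw [← sub_sub_cancel (aknsMatrix p q E t) (aknsMatrix p q E₁ t), aknsMatrix_sub_aknsMatrix]
  simp only [Matrix.sub_mulVec, Matrix.smul_mulVec, Matrix.mulVec_smul, Matrix.mulVec_sub]
  rw [smul_sub, smul_sub, smul_sub, smul_smul, inv_mul_cancel₀ (sub_ne_zero.2 hE), one_smul]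
  abel

variable (hp : Continuous p) (hq : Continuous q)
include hp hq

theorem eq_mulVec_of_hasDerivAt {E : ℂ} {F : ℝ → Fin 2 → ℂ}
    (hF : ∀ y, HasDerivAt F (aknsMatrix p q E y *ᵥ F y) y) (x₀ y : ℝ) :
    F y = Φ E y x₀ *ᵥ F x₀ :=
  congrFun (eq_of_hasDerivAt_mulVec (continuous_aknsMatrix_apply hp hq E) hF
    (hΦ.hasDerivAt_mulVec E x₀ (F x₀)) (t₀ := x₀) (by simp [(hΦ E x₀).2])) y

theorem mul_eq (E : ℂ) (x y z : ℝ) : Φ E z y * Φ E y x = Φ E z x := by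
  refine Matrix.ext_of_mulVec_single fun j => ?_
  rw [← Matrix.mulVec_mulVec]
  exact (hΦ.eq_mulVec_of_hasDerivAt hp hq (hΦ.hasDerivAt_mulVec E x _) y z).symm

theorem differentiable_mulVec (x₀ y : ℝ) (v : Fin 2 → ℂ) :
    Differentiable ℂ fun E => Φ E y x₀ *ᵥ v := by
  intro E₁
  set T := |y - x₀|
  have hy : y ∈ closedBall x₀ T := by simp [T, Real.dist_eq]
  obtain ⟨K, hK₀, hK⟩ := exists_sum_norm_aknsMatrix_le hp hq x₀ T E₁
  set B := gronwallBound ‖v‖ K 0 T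
  set G := gronwallBound 0 K 1 T
  set S := fun E t => slope (fun E => Φ E t x₀ *ᵥ v) E₁ E
  have hS₀ (E : ℂ) : S E x₀ = 0 := by simp [S, slope_def_module, (hΦ _ x₀).2]
  have hS (E : ℂ) (hE : E ∈ ball E₁ 1) (hne : E ≠ E₁) (t : ℝ) (ht : t ∈ closedBall x₀ T) :
      ‖S E t‖ ≤ 2 * B * G := by
    have hdiff := norm_sub_le_of_hasDerivAt_aknsMatrix_add (h := 0)
      (fun t => by rw [Pi.zero_apply, add_zero]; exact hΦ.hasDerivAt_mulVec E₁ x₀ v t)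
      (fun t => by rw [Pi.zero_apply, add_zero]; exact hΦ.hasDerivAt_mulVec E x₀ v t)
      (by simp [(hΦ _ x₀).2]) hK₀ (hK E (ball_subset_closedBall hE))
      (hΦ.norm_mulVec_le_gronwallBound hK₀ (hK E₁ (mem_closedBall_self zero_le_one)) v) t ht
    have hpos : 0 < ‖E - E₁‖ := norm_pos_iff.2 (sub_ne_zero.2 hne)
    calc ‖S E t‖ = ‖E - E₁‖⁻¹ * ‖Φ E t x₀ *ᵥ v - Φ E₁ t x₀ *ᵥ v‖ := by
          rw [show S E t = _ from slope_def_module _ _ _, norm_smul, norm_inv]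
      _ ≤ ‖E - E₁‖⁻¹ * (‖E - E₁‖ * (2 * B) * G) := by gcongr
      _ = 2 * B * G := by field_simp
  refine differentiableAt_of_norm_slope_sub_le one_pos (C := 2 * (2 * B * G) * G)
    fun a ha b hb ha' hb' => ?_
  calc ‖S a y - S b y‖ ≤ ‖a - b‖ * (2 * (2 * B * G)) * G :=
        norm_sub_le_of_hasDerivAt_aknsMatrix_add (hΦ.hasDerivAt_slope_mulVec hb' x₀ v)
          (hΦ.hasDerivAt_slope_mulVec ha' x₀ v) ((hS₀ b).trans (hS₀ a).symm) hK₀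
          (hK a (ball_subset_closedBall ha)) (hS b hb hb') y hy
    _ = 2 * (2 * B * G) * G * ‖a - b‖ := by ring

theorem differentiable_apply (x₀ y : ℝ) (i j : Fin 2) :
    Differentiable ℂ fun E => Φ E y x₀ i j := fun E => by
  simpa [Matrix.mulVec_single_one] using
    differentiableAt_pi.1 (hΦ.differentiable_mulVec hp hq x₀ y (Pi.single j 1) E) i

variable {Ω : ℝ} (hpper : ∀ x, p (x + Ω) = p x) (hqper : ∀ x, q (x + Ω) = q x)
include hpper hqper

theorem add_period (E : ℂ) (y z : ℝ) : Φ E (z + Ω) (y + Ω) = Φ E z y := by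
  refine Matrix.ext_of_mulVec_single fun j => ?_
  have hF (z : ℝ) : HasDerivAt (fun z => Φ E (z + Ω) (y + Ω) *ᵥ Pi.single j 1)
      (aknsMatrix p q E z *ᵥ (Φ E (z + Ω) (y + Ω) *ᵥ Pi.single j 1)) z := by
    have := (hΦ.hasDerivAt_mulVec E (y + Ω) (Pi.single j 1) (z + Ω)).comp_add_const z Ω
    rwa [aknsMatrix_add_period hpper hqper] at this
  exact (hΦ.eq_mulVec_of_hasDerivAt hp hq hF y z).trans
    (by rw [(hΦ E (y + Ω)).2, Matrix.one_mulVec])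

theorem monodromy_mul_eq (E : ℂ) (x x' : ℝ) :
    Φ E (x + Ω) x * Φ E x x' = Φ E x x' * Φ E (x' + Ω) x' := by
  rw [hΦ.mul_eq hp hq, ← hΦ.add_period hp hq hpper hqper E x' x, hΦ.mul_eq hp hq]

theorem monodromy_eq_mul_mul_adjugate (E : ℂ) (x x' : ℝ) :
    Φ E (x + Ω) x = Φ E x x' * Φ E (x' + Ω) x' * (Φ E x x').adjugate := by
  rw [← hΦ.monodromy_mul_eq hp hq hpper hqper, Matrix.mul_assoc, Matrix.mul_adjugate,
    hΦ.det_eq_one, one_smul, Matrix.mul_one]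

theorem trace_monodromy_eq (E : ℂ) (x x' : ℝ) :
    (Φ E (x + Ω) x).trace = (Φ E (x' + Ω) x').trace := by
  rw [hΦ.monodromy_eq_mul_mul_adjugate hp hq hpper hqper E x x', Matrix.trace_mul_cycle,
    Matrix.adjugate_mul, hΦ.det_eq_one, one_smul, Matrix.one_mul]

theorem monodromy_zero_one (E : ℂ) (x x' : ℝ) :
    Φ E (x + Ω) x 0 1 = Φ E x x' 0 0 ^ 2 * Φ E (x' + Ω) x' 0 1
      - Φ E x x' 0 0 * Φ E x x' 0 1 * (Φ E (x' + Ω) x' 0 0 - Φ E (x' + Ω) x' 1 1)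
      - Φ E x x' 0 1 ^ 2 * Φ E (x' + Ω) x' 1 0 := by
  rw [hΦ.monodromy_eq_mul_mul_adjugate hp hq hpper hqper E x x']
  simp [Matrix.mul_apply, Fin.sum_univ_two, Matrix.adjugate_fin_two]
  ring

theorem trace_sq_sub_four_eq (E : ℂ) (x' : ℝ) :
    (Φ E Ω 0).trace ^ 2 - 4 = (Φ E (x' + Ω) x' 0 0 - Φ E (x' + Ω) x' 1 1) ^ 2
      + 4 * (Φ E (x' + Ω) x' 0 1 * Φ E (x' + Ω) x' 1 0) := by
  rw [show Φ E Ω 0 = Φ E (0 + Ω) 0 by rw [zero_add],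
    hΦ.trace_monodromy_eq hp hq hpper hqper E 0 x']
  exact Matrix.trace_sq_sub_four_of_det_eq_one (hΦ.det_eq_one E x' (x' + Ω))

end IsFundamentalMatrix

end AKNS

theorem discriminant_order_ge_twice_immovable_dirichlet_general
    (p q : ℝ → ℂ) (Ω : ℝ)
    (hp : ContDiff ℝ 2 p) (hq : ContDiff ℝ 2 q)
    (hpper : ∀ x, p (x + Ω) = p x) (hqper : ∀ x, q (x + Ω) = q x)
    (xbar : ℝ) (hq0 : q xbar ≠ 0)
    (Φ : ℂ → ℝ → ℝ → Matrix (Fin 2) (Fin 2) ℂ)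
    (hΦ : IsFundamentalMatrix p q Φ)
    (E₀ : ℂ) :
    2 * (⨅ x : ℝ, analyticOrderAt (fun E => Φ E (x + Ω) x 0 1) E₀) ≤
      analyticOrderAt (fun E => (Matrix.trace (Φ E Ω 0)) ^ 2 - 4) E₀ := by
  have hpc := hp.continuous
  have hqc := hq.continuous
  have han (x₀ y : ℝ) (i j : Fin 2) : AnalyticAt ℂ (fun E => Φ E y x₀ i j) E₀ :=
    (hΦ.differentiable_apply hpc hqc x₀ y i j).analyticAt E₀
  obtain ⟨hmu, hmc⟩ := le_analyticOrderAt_of_forall_le_analyticOrderAt_quadratic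
    (l := 𝓝[≠] xbar) (φ := fun x E => Φ E x xbar 0 0) (ψ := fun x E => Φ E x xbar 0 1)
    (g := fun x E => Φ E (x + Ω) x 0 1) ((han _ _ 0 0).sub (han _ _ 1 1)) (han _ _ 0 1)
    (han _ _ 1 0) (fun _ => han _ _ 0 0) (fun _ => han _ _ 0 1)
    (fun x E => hΦ.monodromy_zero_one hpc hqc hpper hqper E x xbar)
    (by simpa using (hΦ.tendsto_apply E₀ xbar 0 0).mono_left nhdsWithin_le_nhds)
    (by simpa using (hΦ.tendsto_apply E₀ xbar 0 1).mono_left nhdsWithin_le_nhds)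
    (hΦ.eventually_apply_zero_one_ne_zero hq0 E₀) (iInf_le _ xbar) (fun x => iInf_le _ x)
  simp_rw [hΦ.trace_sq_sub_four_eq hpc hqc hpper hqper _ xbar]
  exact two_mul_le_analyticOrderAt_sq_add_mul ((han _ _ 0 0).sub (han _ _ 1 1)) (han _ _ 0 1)
    (han _ _ 1 0) hmu (iInf_le _ xbar) hmc 4

/-- For `p, q` of class `C²`, `Ω`-periodic, with `q` not identically zero,
the order `s(E₀)` of the zero of `Δ(E)² - 4` at any `E₀` is at least twice the infimum over
`x` of the order `δ(E₀,x)` of the zero of `E ↦ g(E,x)` at `E₀` (here `Δ` is the Floquet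
discriminant and `g(E,x)` the upper-right entry of the monodromy matrix based at `x`). -/
theorem discriminant_order_ge_twice_immovable_dirichlet
    (p q : ℝ → ℂ) (Ω : ℝ) (hΩ : 0 < Ω)
    (hp : ContDiff ℝ 2 p) (hq : ContDiff ℝ 2 q)
    (hpper : ∀ x, p (x + Ω) = p x) (hqper : ∀ x, q (x + Ω) = q x)
    (xbar : ℝ) (hq0 : q xbar ≠ 0)
    (Φ : ℂ → ℝ → ℝ → Matrix (Fin 2) (Fin 2) ℂ)
    (hΦ : IsFundamentalMatrix p q Φ)
    (E₀ : ℂ)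
    (hΔa : AnalyticAt ℂ (fun E => (Matrix.trace (Φ E Ω 0)) ^ 2 - 4) E₀)
    (hga : ∀ x : ℝ, AnalyticAt ℂ (fun E => Φ E (x + Ω) x 0 1) E₀) :
    2 * (⨅ x : ℝ, analyticOrderAt (fun E => Φ E (x + Ω) x 0 1) E₀) ≤
      analyticOrderAt (fun E => (Matrix.trace (Φ E Ω 0)) ^ 2 - 4) E₀ :=
  discriminant_order_ge_twice_immovable_dirichlet_general p q Ω hp hq hpper hqper xbar hq0 Φ hΦ E₀
end
end
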